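/- arXiv:1007.1076 — 4 statements merged into one kernel-verified Lean document; each statement's English description precedes it below -/
import Mathlib

section
/- Let k be a field of characteristic 0 and let Φ = Σ_W Z_W·W ∈ k⟪X₀,X₁⟫. For every word W in {X₀,X₁}: the coefficient of W in Φ(X_∞,X₀) equals Σ_{(𝐕,𝐤)∈dec(W,X₀)} (−1)^{|𝐕|} · Z_{X₀^{|V₁|}X₁^{k₁}X₀^{|V₂|}X₁^{k₂}⋯X₀^{|V_p|}X₁^{k_p}}, and the coefficient of W in Φ(X₁,X_∞) equals Σ_{(𝐕,𝐤)∈dec(W,X₁)} (−1)^{|𝐕|} · Z_{X₁^{|V₁|}X₀^{k₁}X₁^{|V₂|}X₀^{k₂}⋯X₁^{|V_p|}X₀^{k_p}}. -/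
open scoped BigOperators

/-- Words in the alphabet `{X₀, X₁}`: `false` stands for `X₀`, `true` for `X₁`. -/
abbrev Word := List Bool

/-- The involution `θ` exchanging the letters `X₀` and `X₁`. -/
def theta (W : Word) : Word := W.map (fun b => !b)

/-- The depth of a word: its number of occurrences of `X₁`. -/
def depth (W : Word) : ℕ := W.count true

/-- Coefficient of the word `W` in `Φ(A,B)`, the degree-preserving substitution `X₀ ↦ A`,
`X₁ ↦ B` applied to `Φ = Σ_V Z_V·V`, where the degree-one elements `A = s false`,
`B = s true` are recorded by their coefficients `s : Bool → α → k` on the letters of the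
target alphabet. -/
def subCoeff {α : Type*} {k : Type*} [CommSemiring k] (s : Bool → α → k) (Z : Word → k)
    (W : List α) : k :=
  ∑ v : Fin W.length → Bool, Z (List.ofFn v) * ∏ j : Fin W.length, s (v j) (W.get j)

/-- `IsDec i W L` says that the list `L = [(V₁,k₁),…,(V_p,k_p)]` is a decomposition
`W = V₁ X_i^{k₁} V₂ X_i^{k₂} ⋯ V_p X_i^{k_p}` with `p ≥ 1`, `V₂,…,V_p` nonempty,
`k₁,…,k_{p−1} > 0` and `k_p ≥ 0`; this is the set `dec(W, X_i)`. -/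
def IsDec (i : Bool) (W : Word) (L : List (Word × ℕ)) : Prop :=
  L ≠ [] ∧
  (∀ j : Fin L.length, 0 < (j : ℕ) → (L.get j).1 ≠ []) ∧
  (∀ j : Fin L.length, (j : ℕ) + 1 < L.length → 0 < (L.get j).2) ∧
  W = (L.map (fun p => p.1 ++ List.replicate p.2 i)).flatten

/-- The word `X_i^{|V₁|} X_{1−i}^{k₁} ⋯ X_i^{|V_p|} X_{1−i}^{k_p}` associated to a
decomposition `L = [(V₁,k₁),…,(V_p,k_p)] ∈ dec(W, X_i)`. -/
def decWord (i : Bool) (L : List (Word × ℕ)) : Word :=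
  (L.map (fun p => List.replicate p.1.length i ++ List.replicate p.2 (!i))).flatten

/-- `|𝐕| = |V₁| + ⋯ + |V_p|` for a decomposition `L = [(V₁,k₁),…,(V_p,k_p)]`. -/
def vlen (L : List (Word × ℕ)) : ℕ := (L.map (fun p => p.1.length)).sum

/-- Coefficients of the substitution `X₀ ↦ X_∞ = −X₀−X₁`, `X₁ ↦ X₀`, used for
`Φ(X_∞, X₀)`. -/
def sInf0 {k : Type*} [Ring k] : Bool → Bool → k
  | false, _ => -1
  | true, b => if b then 0 else 1

/-- Coefficients of the substitution `X₀ ↦ X₁`, `X₁ ↦ X_∞ = −X₀−X₁`, used for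
`Φ(X₁, X_∞)`. -/
def s1Inf {k : Type*} [Ring k] : Bool → Bool → k
  | false, b => if b then 1 else 0
  | true, _ => -1

def buildDec (i : Bool) : List (Bool × Bool) → List (Word × ℕ)
  | [] => [([], 0)]
  | (m, w) :: rest =>
    match buildDec i rest with
    | [] => []
    | (V, c) :: t =>
      if m = i then (w :: V, c) :: t
      else if V = [] then ([], c + 1) :: t
      else ([], 1) :: (V, c) :: t

lemma buildDec_ne_nil (i : Bool) (l : List (Bool × Bool)) : buildDec i l ≠ [] := by
  induction l with
  | nil => simp [buildDec]
  | cons a rest ih =>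
    obtain ⟨m, w⟩ := a
    rcases h : buildDec i rest with _ | ⟨⟨V, c⟩, t⟩
    · exact absurd h ih
    · simp only [buildDec, h]
      split <;> [skip; split] <;> simp

lemma decWord_cons (i : Bool) (V : Word) (c : ℕ) (t : List (Word × ℕ)) :
    decWord i ((V, c) :: t) =
      List.replicate V.length i ++ List.replicate c (!i) ++ decWord i t := by
  simp [decWord, List.append_assoc]

lemma decWord_buildDec (i : Bool) (l : List (Bool × Bool)) :
    decWord i (buildDec i l) = l.map Prod.fst := by
  induction l with
  | nil => simp [buildDec, decWord]
  | cons a rest ih =>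
    obtain ⟨m, w⟩ := a
    rcases h : buildDec i rest with _ | ⟨⟨V, c⟩, t⟩
    · exact absurd h (buildDec_ne_nil i rest)
    · rw [h] at ih
      simp only [buildDec, h, List.map_cons]
      by_cases hm : m = i
      · rw [if_pos hm, decWord_cons]
        rw [decWord_cons] at ih
        simp only [List.length_cons, List.replicate_succ]
        simp [hm, ← ih]
      · have hm' : m = !i := by cases m <;> cases i <;> simp_all
        by_cases hV : V = []
        · rw [if_neg hm, if_pos hV]
          subst hV
          rw [decWord_cons]
          rw [decWord_cons] at ih
          rw [List.replicate_succ]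
          simp [hm', ← ih]
        · rw [if_neg hm, if_neg hV, decWord_cons]
          simp [hm', ← ih, decWord_cons]
lemma flatten_buildDec (i : Bool) (l : List (Bool × Bool)) :
    ((buildDec i l).map (fun p => p.1 ++ List.replicate p.2 i)).flatten =
      l.map (fun p => if p.1 = i then p.2 else i) := by
  induction l with
  | nil => simp [buildDec]
  | cons a rest ih =>
    obtain ⟨m, w⟩ := a
    rcases h : buildDec i rest with _ | ⟨⟨V, c⟩, t⟩
    · exact absurd h (buildDec_ne_nil i rest)
    · rw [h] at ih
      simp only [buildDec, h, List.map_cons]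
      by_cases hm : m = i
      · simp only [if_pos hm]
        simp at ih ⊢
        simp [hm, ih]
      · by_cases hV : V = []
        · subst hV
          simp only [if_neg hm, if_pos rfl]
          simp [List.replicate_succ] at ih ⊢
          simp [hm, ih]
        · simp only [if_neg hm, if_neg hV]
          simp [List.replicate_succ] at ih ⊢
          simp [hm, ih]

lemma buildDec_good (i : Bool) (l : List (Bool × Bool)) :
    (∀ x ∈ (buildDec i l).tail, x.1 ≠ []) ∧ (∀ x ∈ (buildDec i l).dropLast, 0 < x.2) := by
  induction l with
  | nil => simp [buildDec]
  | cons a rest ih =>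
    obtain ⟨m, w⟩ := a
    rcases h : buildDec i rest with _ | ⟨⟨V, c⟩, t⟩
    · exact absurd h (buildDec_ne_nil i rest)
    · rw [h] at ih
      obtain ⟨ih1, ih2⟩ := ih
      simp only [List.tail_cons] at ih1
      simp only [buildDec, h]
      by_cases hm : m = i
      · rw [if_pos hm]
        refine ⟨by simpa using ih1, ?_⟩
        rcases eq_or_ne t [] with rfl | ht
        · simp
        · rw [List.dropLast_cons_of_ne_nil ht]
          rw [List.dropLast_cons_of_ne_nil ht] at ih2
          intro x hx
          rcases List.mem_cons.mp hx with rfl | hx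
          · exact ih2 (V, c) List.mem_cons_self
          · exact ih2 x (List.mem_cons_of_mem _ hx)
      · by_cases hV : V = []
        · rw [if_neg hm, if_pos hV]
          subst hV
          refine ⟨by simpa using ih1, ?_⟩
          rcases eq_or_ne t [] with rfl | ht
          · simp
          · rw [List.dropLast_cons_of_ne_nil ht]
            rw [List.dropLast_cons_of_ne_nil ht] at ih2
            intro x hx
            rcases List.mem_cons.mp hx with rfl | hx
            · simp
            · exact ih2 x (List.mem_cons_of_mem _ hx)
        · rw [if_neg hm, if_neg hV]
          constructor
          · intro x hx
            rcases List.mem_cons.mp (by simpa using hx) with rfl | hx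
            · exact hV
            · exact ih1 x hx
          · rw [List.dropLast_cons_of_ne_nil (by simp)]
            intro x hx
            rcases List.mem_cons.mp hx with rfl | hx
            · simp
            · exact ih2 x hx

lemma buildDec_seg (i : Bool) (V : Word) (l : List (Bool × Bool)) {V₀ : Word} {c : ℕ}
    {t : List (Word × ℕ)} (h : buildDec i l = (V₀, c) :: t) :
    buildDec i (V.map (fun w => (i, w)) ++ l) = (V ++ V₀, c) :: t := by
  induction V with
  | nil => simpa using h
  | cons w V ih =>
    simp only [List.map_cons, List.cons_append, buildDec, List.append_eq]
    rw [ih]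
    simp

lemma buildDec_run_empty (i : Bool) (n : ℕ) (q : Bool) (l : List (Bool × Bool)) {c : ℕ}
    {t : List (Word × ℕ)} (h : buildDec i l = ([], c) :: t) :
    buildDec i (List.replicate n (!i, q) ++ l) = ([], n + c) :: t := by
  induction n with
  | zero => simpa using h
  | succ n ih =>
    rw [List.replicate_succ, List.cons_append]
    simp only [buildDec, List.append_eq]
    rw [ih]
    simp
    omega

lemma buildDec_run_pos (i : Bool) (n : ℕ) (hn : 0 < n) (q : Bool) (l : List (Bool × Bool))
    {V : Word} (hV : V ≠ []) {c : ℕ} {t : List (Word × ℕ)}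
    (h : buildDec i l = (V, c) :: t) :
    buildDec i (List.replicate n (!i, q) ++ l) = ([], n) :: (V, c) :: t := by
  induction n with
  | zero => omega
  | succ n ih =>
    rcases Nat.eq_zero_or_pos n with rfl | hn'
    · rw [List.replicate_succ, List.cons_append]
      simp only [buildDec, List.append_eq, List.replicate_zero, List.nil_append]
      rw [h]
      simp [hV]
    · rw [List.replicate_succ, List.cons_append]
      simp only [buildDec, List.append_eq]
      rw [ih hn']
      simp

lemma zip_replicate_map (i : Bool) (V : Word) :
    (List.replicate V.length i).zip V = V.map (fun w => (i, w)) := by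
  induction V with
  | nil => simp
  | cons w V ih => simp [List.replicate_succ, ih]

lemma zip_replicate_replicate {α β : Type*} (n : ℕ) (a : α) (b : β) :
    (List.replicate n a).zip (List.replicate n b) = List.replicate n (a, b) := by
  induction n with
  | zero => simp
  | succ n ih => simp [List.replicate_succ, ih]

lemma buildDec_decWord (i : Bool) (L : List (Word × ℕ)) (hne : L ≠ [])
    (h1 : ∀ x ∈ L.tail, x.1 ≠ []) (h2 : ∀ x ∈ L.dropLast, 0 < x.2) :
    buildDec i ((decWord i L).zip ((L.map (fun p => p.1 ++ List.replicate p.2 i)).flatten))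
      = L := by
  induction L with
  | nil => exact absurd rfl hne
  | cons a t ih =>
    obtain ⟨V, c⟩ := a
    rw [decWord_cons]
    have hflat : ((((V, c) :: t).map (fun p => p.1 ++ List.replicate p.2 i)).flatten)
        = (V ++ List.replicate c i) ++ (t.map (fun p => p.1 ++ List.replicate p.2 i)).flatten := by
      simp
    rw [hflat, List.append_assoc, List.append_assoc,
      List.zip_append (by simp),
      List.zip_append (by simp),
      zip_replicate_map, zip_replicate_replicate]
    rcases eq_or_ne t [] with rfl | ht
    · simp only [decWord, List.map_nil, List.flatten_nil, List.zip_nil_left]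
      rw [buildDec_seg i V _ (buildDec_run_empty i c i [] rfl)]
      simp
    · obtain ⟨⟨V₂, c₂⟩, t', rfl⟩ := List.exists_cons_of_ne_nil ht
      have hih : buildDec i ((decWord i ((V₂, c₂) :: t')).zip
          ((((V₂, c₂) :: t').map (fun p => p.1 ++ List.replicate p.2 i)).flatten))
          = (V₂, c₂) :: t' := by
        refine ih (by simp) (fun x hx => h1 x ?_) (fun x hx => h2 x ?_)
        · exact List.mem_cons_of_mem _ (by simpa using hx)
        · rw [List.dropLast_cons_of_ne_nil (by simp)]
          exact List.mem_cons_of_mem _ hx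
      have hV₂ : V₂ ≠ [] := h1 (V₂, c₂) (by simp)
      have hc : 0 < c := by
        refine h2 (V, c) ?_
        rw [List.dropLast_cons_of_ne_nil (by simp)]
        exact List.mem_cons_self
      rw [buildDec_seg i V _ (buildDec_run_pos i c hc i _ hV₂ hih)]
      simp

lemma count_decWord (i : Bool) (L : List (Word × ℕ)) :
    (decWord i L).count i = vlen L := by
  induction L with
  | nil => simp [decWord, vlen]
  | cons a t ih =>
    obtain ⟨V, c⟩ := a
    rw [decWord_cons]
    simp [vlen, List.count_append, ih, List.count_replicate]

lemma length_decWord (i : Bool) (L : List (Word × ℕ)) :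
    (decWord i L).length = ((L.map (fun p => p.1 ++ List.replicate p.2 i)).flatten).length := by
  induction L with
  | nil => simp [decWord]
  | cons a t ih =>
    obtain ⟨V, c⟩ := a
    rw [decWord_cons]
    simp only [List.map_cons, List.flatten_cons, List.length_append, ih]
    simp

lemma sign_prod {k : Type*} [CommRing k] (i : Bool) (l : List Bool) :
    (l.map (fun b => if b = i then (-1 : k) else 1)).prod = (-1 : k) ^ (l.count i) := by
  induction l with
  | nil => simp
  | cons b l ih =>
    by_cases hb : b = i
    · simp [hb, ih, pow_succ, List.count_cons, mul_comm]
    · simp [hb, ih, List.count_cons, Ne.symm]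

lemma fin_tail_iff {α : Type*} (L : List α) (P : α → Prop) :
    (∀ j : Fin L.length, 0 < (j : ℕ) → P (L.get j)) ↔ ∀ x ∈ L.tail, P x := by
  constructor
  · intro h x hx
    obtain ⟨n, hn, rfl⟩ := List.mem_iff_getElem.mp hx
    rw [List.getElem_tail]
    have hn' : n + 1 < L.length := by
      have := L.length_tail ▸ hn
      omega
    exact h ⟨n + 1, hn'⟩ (by simp)
  · intro h j hj
    have hj' : (j : ℕ) - 1 < L.tail.length := by
      rw [List.length_tail]
      omega
    have : L.tail[(j : ℕ) - 1] = L.get j := by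
      rw [List.getElem_tail]
      congr 1
      omega
    exact this ▸ h _ (List.getElem_mem hj')

lemma fin_dropLast_iff {α : Type*} (L : List α) (P : α → Prop) :
    (∀ j : Fin L.length, (j : ℕ) + 1 < L.length → P (L.get j)) ↔ ∀ x ∈ L.dropLast, P x := by
  constructor
  · intro h x hx
    obtain ⟨n, hn, rfl⟩ := List.mem_iff_getElem.mp hx
    rw [List.getElem_dropLast]
    have hn' : n < L.length := by
      have := L.length_dropLast ▸ hn
      omega
    refine h ⟨n, hn'⟩ ?_
    have := L.length_dropLast ▸ hn
    simpa using by omega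
  · intro h j hj
    have hj' : (j : ℕ) < L.dropLast.length := by
      rw [List.length_dropLast]
      omega
    have : L.dropLast[(j : ℕ)] = L.get j := by
      rw [List.getElem_dropLast]
      simp
    exact this ▸ h _ (List.getElem_mem hj')

theorem key {k : Type*} [CommRing k] (i : Bool) (Z : Word → k) (W : Word)
    (s : Bool → Bool → k)
    (hs : ∀ c b, s c b = if c = i then -1 else if b = i then 1 else 0) :
    subCoeff s Z W =
      ∑ᶠ L ∈ {L : List (Word × ℕ) | IsDec i W L},
        (-1 : k) ^ vlen L * Z (decWord i L) := by
  classical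
  set n := W.length with hn
  set P : (Fin n → Bool) → Prop := fun v => ∀ j : Fin n, v j = !i → W.get j = i with hP
  set e : (Fin n → Bool) → List (Word × ℕ) :=
    fun v => buildDec i ((List.ofFn v).zip W) with he
  have hdec : ∀ v : Fin n → Bool, decWord i (e v) = List.ofFn v := by
    intro v
    rw [he, decWord_buildDec]
    exact List.map_fst_zip (by simp [hn])
  -- Step A
  have stepA : subCoeff s Z W =
      ∑ v ∈ Finset.univ.filter P, Z (List.ofFn v) * (-1 : k) ^ ((List.ofFn v).count i) := by
    rw [subCoeff, ← Finset.sum_filter_add_sum_filter_not Finset.univ P]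
    have hzero : ∑ v ∈ Finset.univ.filter (fun v => ¬ P v),
        Z (List.ofFn v) * ∏ j, s (v j) (W.get j) = 0 := by
      refine Finset.sum_eq_zero fun v hv => ?_
      simp only [Finset.mem_filter, Finset.mem_univ, true_and, hP] at hv
      push_neg at hv
      obtain ⟨j, hj1, hj2⟩ := hv
      have : s (v j) (W.get j) = 0 := by
        rw [hs, hj1, if_neg (by simp), if_neg hj2]
      rw [Finset.prod_eq_zero (Finset.mem_univ j) this, mul_zero]
    rw [hzero, add_zero]
    refine Finset.sum_congr rfl fun v hv => ?_
    simp only [Finset.mem_filter, Finset.mem_univ, true_and] at hv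
    congr 1
    have hprod : ∏ j : Fin n, s (v j) (W.get j)
        = ∏ j : Fin n, (if v j = i then (-1 : k) else 1) := by
      refine Finset.prod_congr rfl fun j _ => ?_
      rw [hs]
      by_cases h : v j = i
      · simp [h]
      · have h' : v j = !i := by cases hvj : v j <;> cases i <;> simp_all
        rw [if_neg h, hv j h', if_pos rfl, if_neg h]
    rw [hprod, ← sign_prod i (List.ofFn v), List.map_ofFn, List.prod_ofFn]
    rfl
  -- Bijection
  have hbij : Set.BijOn e {v | P v} {L | IsDec i W L} := by
    refine ⟨?_, ?_, ?_⟩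
    · -- MapsTo
      intro v hv
      refine ⟨buildDec_ne_nil _ _, ?_, ?_, ?_⟩
      · exact (fin_tail_iff _ (fun x : Word × ℕ => x.1 ≠ [])).mpr (buildDec_good i _).1
      · exact (fin_dropLast_iff _ (fun x : Word × ℕ => 0 < x.2)).mpr (buildDec_good i _).2
      · rw [he, flatten_buildDec]
        refine List.ext_getElem (by simp [hn]) fun m h1 h2 => ?_
        rw [List.getElem_map, List.getElem_zip]
        have hofn : (List.ofFn v)[m]'(by simpa using h1) = v ⟨m, h1⟩ := by
          rw [List.getElem_ofFn]
        rw [hofn]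
        by_cases h : v ⟨m, h1⟩ = i
        · simp [h]
        · have h' : v ⟨m, h1⟩ = !i := by cases hvj : v ⟨m, h1⟩ <;> cases i <;> simp_all
          rw [if_neg h]
          simpa using hv ⟨m, h1⟩ h'
    · -- InjOn
      intro v _ v' _ hvv
      have := congrArg (decWord i) hvv
      rw [hdec, hdec] at this
      exact List.ofFn_inj.mp this
    · -- SurjOn
      intro L hL
      obtain ⟨hne, ht, hd, hW⟩ := hL
      have hlenL : (decWord i L).length = n := by
        rw [length_decWord, ← hW]
      set v : Fin n → Bool := fun j => (decWord i L).get (Fin.cast hlenL.symm j) with hv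
      have hofFn : List.ofFn v = decWord i L := by
        refine List.ext_getElem (by simp [hlenL]) fun m h1 h2 => ?_
        rw [List.getElem_ofFn]
        rfl
      have heL : e v = L := by
        rw [he]
        simp only [hofFn]
        conv_lhs => rw [hW]
        exact buildDec_decWord i L hne ((fin_tail_iff _ _).mp ht) ((fin_dropLast_iff _ _).mp hd)
      refine ⟨v, ?_, heL⟩
      intro j hj
      have hWeq : W = ((List.ofFn v).zip W).map (fun p => if p.1 = i then p.2 else i) := by
        conv_lhs => rw [hW, ← heL]
        rw [he, flatten_buildDec]
      have hjz : (j : ℕ) < (((List.ofFn v).zip W).map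
          (fun p => if p.1 = i then p.2 else i)).length := by
        simp only [List.length_map, List.length_zip, List.length_ofFn]
        have := j.2; omega
      have h3 : W[(j : ℕ)]'j.2 = (((List.ofFn v).zip W).map
          (fun p => if p.1 = i then p.2 else i))[(j : ℕ)]'hjz := by
        exact List.getElem_of_eq hWeq _
      rw [List.getElem_map, List.getElem_zip] at h3
      have h4 : (List.ofFn v)[(j : ℕ)]'(by simpa using j.2) = v j := by
        rw [List.getElem_ofFn]
      rw [h4, hj, if_neg (by simp)] at h3
      simpa using h3
  have hfun : ∀ v ∈ {v | P v},
      Z (List.ofFn v) * (-1 : k) ^ ((List.ofFn v).count i)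
        = (-1 : k) ^ vlen (e v) * Z (decWord i (e v)) := by
    intro v _
    rw [hdec, ← count_decWord i (e v), hdec, mul_comm]
  rw [stepA, ← finsum_mem_coe_finset]
  have hcoe : (↑(Finset.univ.filter P) : Set (Fin n → Bool)) = {v | P v} := by
    ext v; simp
  rw [hcoe]
  exact finsum_mem_eq_of_bijOn e hbij hfun

/-- Proposition `C3Phi`.  For every word `W`, the coefficient of `W` in
`Φ(X_∞, X₀)` is `Σ_{(𝐕,𝐤) ∈ dec(W,X₀)} (−1)^{|𝐕|} Z_{X₀^{|V₁|}X₁^{k₁}⋯X₀^{|V_p|}X₁^{k_p}}`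
and the coefficient of `W` in `Φ(X₁, X_∞)` is
`Σ_{(𝐕,𝐤) ∈ dec(W,X₁)} (−1)^{|𝐕|} Z_{X₁^{|V₁|}X₀^{k₁}⋯X₁^{|V_p|}X₀^{k_p}}`. -/
theorem statement1 {k : Type*} [Field k] [CharZero k] (Z : Word → k) (W : Word) :
    subCoeff sInf0 Z W =
      (∑ᶠ L ∈ {L : List (Word × ℕ) | IsDec false W L},
        (-1 : k) ^ vlen L * Z (decWord false L)) ∧
    subCoeff s1Inf Z W =
      (∑ᶠ L ∈ {L : List (Word × ℕ) | IsDec true W L},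
        (-1 : k) ^ vlen L * Z (decWord true L)) := by
  constructor
  · exact key false Z W sInf0 (by intro c b; cases c <;> cases b <;> simp [sInf0])
  · exact key true Z W s1Inf (by intro c b; cases c <;> cases b <;> simp [s1Inf])
end

section
/- Let k be a field of characteristic 0. The elements of the braid algebra A given by 1 together with the images of the monomials U·V, where U is a word in the letters X₂₄,X₃₄,X₄₅ and V is a word in the letters X₁₂,X₂₃ (U and V possibly empty but not both), form a homogeneous k-vector space basis B₄ of A. Moreover, writing each word W ∈ 𝔸₅ in A as W = Σ_{b₄∈B₄} l_{b₄,W}·b₄ (with l_{b₄,W} ∈ ℤ), the pentagon relation — equivalently, for every n ≥ 1 the image in A of Σ_{W∈𝔸₅,|W|=n} C_{5,W}·W is 0 — holds if and only if for every b₄ ∈ B₄ with b₄ ≠ 1, Σ_{W∈𝔸₅} l_{b₄,W}·C_{5,W} = 0. -/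
open scoped BigOperators

/-- The coefficientwise unit of the noncommutative power series algebra. -/
def deltaOne {α : Type*} {k : Type*} [Semiring k] : List α → k
  | [] => 1
  | _ :: _ => 0

/-- Convolution of a list of series: the coefficient of `W` in the product, i.e. the sum
over all factorizations of `W` into as many (possibly empty) factors of the products of
the corresponding coefficients. -/
def convL {α : Type*} {k : Type*} [Semiring k] : List (List α → k) → List α → k
  | [], W => deltaOne W
  | F :: Fs, W => ∑ i ∈ Finset.range (W.length + 1), F (W.take i) * convL Fs (W.drop i)

/-- The five letters `X₃₄, X₄₅, X₂₄, X₁₂, X₂₃`; words in these letters form the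
dictionary `𝔸₅`. -/
inductive L5 : Type
  | x34 | x45 | x24 | x12 | x23
  deriving DecidableEq

instance : Fintype L5 :=
  ⟨⟨{L5.x34, L5.x45, L5.x24, L5.x12, L5.x23}, by decide⟩, by intro x; cases x <;> decide⟩

section Braid

variable (k : Type*) [CommRing k]

/-- The defining relations of the sphere braid algebra on generators `X_{ij}`,
`1 ≤ i,j ≤ 5` (0-based in Lean): `X_{ii} = 0`, `X_{ij} = X_{ji}`, `Σ_j X_{ij} = 0` for
each `i`, and `[X_{ij}, X_{lm}] = 0` whenever `{i,j} ∩ {l,m} = ∅`. -/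
inductive BraidRel : FreeAlgebra k (Fin 5 × Fin 5) → FreeAlgebra k (Fin 5 × Fin 5) → Prop
  | diag (i : Fin 5) : BraidRel (FreeAlgebra.ι k (i, i)) 0
  | symm (i j : Fin 5) : BraidRel (FreeAlgebra.ι k (i, j)) (FreeAlgebra.ι k (j, i))
  | rowSum (i : Fin 5) : BraidRel (∑ j : Fin 5, FreeAlgebra.ι k (i, j)) 0
  | comm (i j l m : Fin 5) (h1 : i ≠ l) (h2 : i ≠ m) (h3 : j ≠ l) (h4 : j ≠ m) :
      BraidRel (FreeAlgebra.ι k (i, j) * FreeAlgebra.ι k (l, m))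
        (FreeAlgebra.ι k (l, m) * FreeAlgebra.ι k (i, j))

/-- The braid algebra `A`: the quotient of the free noncommutative algebra on the
generators `X_{ij}` by the braid relations. -/
abbrev BraidAlg := RingQuot (BraidRel k)

/-- The generator `X_{ij}` viewed in the braid algebra. -/
noncomputable def Xg (p : Fin 5 × Fin 5) : BraidAlg k :=
  RingQuot.mkAlgHom k (BraidRel k) (FreeAlgebra.ι k p)

/-- The pair of indices of one of the five letters (`X_{ij}` with 1-based indices `i,j`
becomes 0-based). -/
def L5.toPair : L5 → Fin 5 × Fin 5
  | .x34 => (2, 3)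
  | .x45 => (3, 4)
  | .x24 => (1, 3)
  | .x12 => (0, 1)
  | .x23 => (1, 2)

/-- The image in the braid algebra of a word in the five letters of `𝔸₅`. -/
noncomputable def wordToA (W : List L5) : BraidAlg k :=
  (W.map (fun l => Xg k l.toPair)).prod

/-- The image in the braid algebra of a word in all the generators `X_{ij}`. -/
noncomputable def wordToAgen (W : List (Fin 5 × Fin 5)) : BraidAlg k :=
  (W.map (Xg k)).prod

/-- The degree-`n` homogeneous component of the braid algebra: the span of the images of
the words of length `n` in the generators (the relations being homogeneous, the braid
algebra is graded by these components). -/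
noncomputable def Agrade (n : ℕ) : Submodule k (BraidAlg k) :=
  Submodule.span k (wordToAgen k '' {W : List (Fin 5 × Fin 5) | W.length = n})

end Braid

/-- The letterwise map `ρ₁ : X₁₂ ↦ X₀, X₂₃ ↦ X₁`, the other letters going to `0`. -/
def rho1L : L5 → Option Bool
  | .x12 => some false
  | .x23 => some true
  | _ => none

/-- The letterwise map `ρ₂ : X₃₄ ↦ X₀, X₄₅ ↦ X₁`, the other letters going to `0`. -/
def rho2L : L5 → Option Bool
  | .x34 => some false
  | .x45 => some true
  | _ => none

/-- The letterwise map `ρ₃ : X₁₂ ↦ X₁, X₂₃ ↦ X₀, X₃₄ ↦ X₀, X₂₄ ↦ X₀, X₄₅ ↦ 0`. -/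
def rho3L : L5 → Option Bool
  | .x12 => some true
  | .x23 => some false
  | .x34 => some false
  | .x24 => some false
  | .x45 => none

/-- The letterwise map `ρ₄ : X₂₃ ↦ X₀, X₃₄ ↦ X₁`, the other letters going to `0`. -/
def rho4L : L5 → Option Bool
  | .x23 => some false
  | .x34 => some true
  | _ => none

/-- The letterwise map `ρ₅ : X₂₃ ↦ X₁, X₃₄ ↦ X₁, X₂₄ ↦ X₁, X₄₅ ↦ X₀, X₁₂ ↦ 0`. -/
def rho5L : L5 → Option Bool
  | .x23 => some true
  | .x34 => some true
  | .x24 => some true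
  | .x45 => some false
  | .x12 => none

/-- Extension of `Z` to `0`-or-word arguments, with the convention `Z_0 = 0`.  The maps
`ρ_i` are extended multiplicatively to words via `List.mapM`, a word containing a letter
sent to `0` being sent to `0` (i.e. `none`). -/
def Zopt {k : Type*} [Semiring k] (Z : Word → k) : Option Word → k
  | none => 0
  | some V => Z V

/-- The coefficient `C_{5,W} = Σ_{U₁U₂U₃U₄U₅ = W} Z_{ρ₁(U₁)}Z_{ρ₂(U₂)}Z_{ρ₃(U₃)}Z_{ρ₄(U₄)}Z_{ρ₅(U₅)}`,
the sum running over all factorizations of `W` into five (possibly empty) words. -/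
def C5 {k : Type*} [CommSemiring k] (Z : Word → k) : List L5 → k :=
  convL [fun U => Zopt Z (U.mapM rho1L), fun U => Zopt Z (U.mapM rho2L),
    fun U => Zopt Z (U.mapM rho3L), fun U => Zopt Z (U.mapM rho4L),
    fun U => Zopt Z (U.mapM rho5L)]

/-- The pentagon relation, written degreewise: for every `n ≥ 1`, the image in the braid
algebra of `Σ_{W ∈ 𝔸₅, |W| = n} C_{5,W}·W` vanishes.  (Words of length `n` in the five
letters are enumerated as `List.ofFn v` for `v : Fin n → L5`.) -/
noncomputable def PentagonHolds (k : Type*) [CommRing k] (Z : Word → k) : Prop :=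
  ∀ n : ℕ, 1 ≤ n →
    ∑ v : Fin n → L5, C5 Z (List.ofFn v) • wordToA k (List.ofFn v) = 0

/-- The index set of the family `B₄`: pairs `(U, V)` where `U` is a word in the letters
`X₂₄, X₃₄, X₄₅` and `V` is a word in the letters `X₁₂, X₂₃` (both possibly empty; the pair
`(∅, ∅)` indexes the element `1`). -/
def I4 : Type :=
  {p : List L5 × List L5 //
    (∀ a ∈ p.1, a = L5.x24 ∨ a = L5.x34 ∨ a = L5.x45) ∧
    (∀ a ∈ p.2, a = L5.x12 ∨ a = L5.x23)}


section Aux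

inductive T3 : Type | t | r | s deriving DecidableEq
inductive P2 : Type | p | q deriving DecidableEq

abbrev NIdx : Type := List T3 × List P2

variable (k : Type*) [CommRing k]

abbrev FMod : Type _ := NIdx →₀ k

/-- prepend a T-letter -/
noncomputable def consT (a : T3) : FMod k →ₗ[k] FMod k :=
  Finsupp.lmapDomain k k (fun x => (a :: x.1, x.2))

noncomputable def pushP : List T3 → List P2 → FMod k
  | [], V => Finsupp.single ([], .p :: V) 1
  | .t :: U, V => consT k .t (pushP U V)
      + Finsupp.single (.s :: .t :: U, V) 1 - Finsupp.single (.t :: .s :: U, V) 1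
      + Finsupp.single (.r :: .t :: U, V) 1 - Finsupp.single (.t :: .r :: U, V) 1
  | .r :: U, V => consT k .r (pushP U V)
  | .s :: U, V => consT k .s (pushP U V)

noncomputable def pushQ : List T3 → List P2 → FMod k
  | [], V => Finsupp.single ([], .q :: V) 1
  | .t :: U, V => consT k .t (pushQ U V)
      + Finsupp.single (.t :: .r :: U, V) 1 - Finsupp.single (.r :: .t :: U, V) 1
  | .r :: U, V => consT k .r (pushQ U V)
      + Finsupp.single (.r :: .t :: U, V) 1 - Finsupp.single (.t :: .r :: U, V) 1
  | .s :: U, V => consT k .s (pushQ U V)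

noncomputable def opP : FMod k →ₗ[k] FMod k :=
  Finsupp.lift (FMod k) k NIdx (fun x => pushP k x.1 x.2)

noncomputable def opQ : FMod k →ₗ[k] FMod k :=
  Finsupp.lift (FMod k) k NIdx (fun x => pushQ k x.1 x.2)

noncomputable def EL : Fin 5 → Module.End k (FMod k) :=
  ![opP k, opQ k, consT k .r, consT k .s, consT k .t]

@[simp] lemma consT_single (a : T3) (x : NIdx) (c : k) :
    consT k a (Finsupp.single x c) = Finsupp.single (a :: x.1, x.2) c := by
  simp [consT, Finsupp.mapDomain_single]

@[simp] lemma opP_single (x : NIdx) (c : k) :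
    opP k (Finsupp.single x c) = c • pushP k x.1 x.2 := by
  simp [opP]

@[simp] lemma opQ_single (x : NIdx) (c : k) :
    opQ k (Finsupp.single x c) = c • pushQ k x.1 x.2 := by
  simp [opQ]

open T3 P2

lemma idPR : opP k * consT k r = consT k r * opP k := by
  ext x : 2
  obtain ⟨U, V⟩ := x
  simp [Module.End.mul_apply, LinearMap.comp_apply, Finsupp.lsingle_apply, pushP]

lemma idPS : opP k * consT k s = consT k s * opP k := by
  ext ⟨U, V⟩ : 2
  simp [Module.End.mul_apply, LinearMap.comp_apply, Finsupp.lsingle_apply, pushP]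

lemma idQS : opQ k * consT k s = consT k s * opQ k := by
  ext ⟨U, V⟩ : 2
  simp [Module.End.mul_apply, LinearMap.comp_apply, Finsupp.lsingle_apply, pushQ]

lemma idQT : opQ k * consT k t =
    consT k t * opQ k + consT k t * consT k r - consT k r * consT k t := by
  ext ⟨U, V⟩ : 2
  simp [Module.End.mul_apply, LinearMap.comp_apply, Finsupp.lsingle_apply, pushQ]

lemma idQR : opQ k * consT k r =
    consT k r * opQ k + consT k r * consT k t - consT k t * consT k r := by
  ext ⟨U, V⟩ : 2
  simp [Module.End.mul_apply, LinearMap.comp_apply, Finsupp.lsingle_apply, pushQ]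

lemma idPT : opP k * consT k t =
    consT k t * opP k + consT k s * consT k t - consT k t * consT k s
      + consT k r * consT k t - consT k t * consT k r := by
  ext ⟨U, V⟩ : 2
  simp [Module.End.mul_apply, LinearMap.comp_apply, Finsupp.lsingle_apply, pushP]

/-- coefficients of the generators in the basis (P,Q,R,S,T) -/
def cf : Fin 5 → Fin 5 → Fin 5 → ℤ :=
  ![![![0,0,0,0,0], ![1,0,0,0,0], ![-1,-1,0,1,0], ![0,0,-1,-1,-1], ![0,1,1,0,1]],
    ![![1,0,0,0,0], ![0,0,0,0,0], ![0,1,0,0,0], ![0,0,0,0,1], ![-1,-1,0,0,-1]],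
    ![![-1,-1,0,1,0], ![0,1,0,0,0], ![0,0,0,0,0], ![0,0,1,0,0], ![1,0,-1,-1,0]],
    ![![0,0,-1,-1,-1], ![0,0,0,0,1], ![0,0,1,0,0], ![0,0,0,0,0], ![0,0,0,1,0]],
    ![![0,1,1,0,1], ![-1,-1,0,0,-1], ![1,0,-1,-1,0], ![0,0,0,1,0], ![0,0,0,0,0]]]

lemma cf_diag : ∀ i b, cf i i b = 0 := by decide
lemma cf_symm : ∀ i j b, cf i j b = cf j i b := by decide
lemma cf_row : ∀ i b, cf i 0 b + cf i 1 b + cf i 2 b + cf i 3 b + cf i 4 b = 0 := by decide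
lemma cf_comm : ∀ i j l m : Fin 5, i ≠ l → i ≠ m → j ≠ l → j ≠ m →
    (cf i j 0 * cf l m 1 = cf i j 1 * cf l m 0) ∧
    (cf i j 2 * cf l m 3 = cf i j 3 * cf l m 2) ∧
    (cf i j 2 * cf l m 4 - cf i j 4 * cf l m 2 - (cf i j 1 * cf l m 4 - cf i j 4 * cf l m 1)
      + (cf i j 1 * cf l m 2 - cf i j 2 * cf l m 1)
      + (cf i j 0 * cf l m 4 - cf i j 4 * cf l m 0) = 0) ∧
    (cf i j 3 * cf l m 4 - cf i j 4 * cf l m 3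
      + (cf i j 0 * cf l m 4 - cf i j 4 * cf l m 0) = 0) := by decide

noncomputable def gOp (i j : Fin 5) : Module.End k (FMod k) :=
  ∑ b : Fin 5, (cf i j b : k) • EL k b

lemma EL0 : EL k 0 = opP k := rfl
lemma EL1 : EL k 1 = opQ k := rfl
lemma EL2 : EL k 2 = consT k r := rfl
lemma EL3 : EL k 3 = consT k s := rfl
lemma EL4 : EL k 4 = consT k t := rfl

lemma commExpand (u v : Fin 5 → ℤ)
    (hA : u 0 * v 1 = u 1 * v 0)
    (hB : u 2 * v 3 = u 3 * v 2)
    (hC : u 2 * v 4 - u 4 * v 2 - (u 1 * v 4 - u 4 * v 1) + (u 1 * v 2 - u 2 * v 1)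
      + (u 0 * v 4 - u 4 * v 0) = 0)
    (hD : u 3 * v 4 - u 4 * v 3 + (u 0 * v 4 - u 4 * v 0) = 0) :
    (∑ b : Fin 5, (u b : k) • EL k b) * (∑ b : Fin 5, (v b : k) • EL k b)
      = (∑ b : Fin 5, (v b : k) • EL k b) * (∑ b : Fin 5, (u b : k) • EL k b) := by
  have hA' := congrArg (fun z : ℤ => (z : k)) hA
  have hB' := congrArg (fun z : ℤ => (z : k)) hB
  have hC' := congrArg (fun z : ℤ => (z : k)) hC
  have hD' := congrArg (fun z : ℤ => (z : k)) hD
  push_cast at hA' hB' hC' hD'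
  simp only [Fin.sum_univ_five, EL0, EL1, EL2, EL3, EL4]
  simp only [add_mul, mul_add, smul_mul_assoc, mul_smul_comm, smul_smul]
  simp only [idPR, idPS, idQS, idQT, idQR, idPT]
  simp only [smul_add, smul_sub]
  match_scalars <;>
    first
      | ring1
      | linear_combination hA'
      | linear_combination (-1 : k) * hA'
      | linear_combination hB'
      | linear_combination (-1 : k) * hB'
      | linear_combination hC'
      | linear_combination (-1 : k) * hC'
      | linear_combination hD'
      | linear_combination (-1 : k) * hD'

lemma gOp_comm (i j l m : Fin 5) (h1 : i ≠ l) (h2 : i ≠ m) (h3 : j ≠ l) (h4 : j ≠ m) :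
    gOp k i j * gOp k l m = gOp k l m * gOp k i j := by
  obtain ⟨hA, hB, hC, hD⟩ := cf_comm i j l m h1 h2 h3 h4
  exact commExpand k (cf i j) (cf l m) hA hB hC hD

end Aux

section ASide

variable (k : Type*) [Field k] [CharZero k]

open L5

/-- the five letters in the braid algebra, in the order P,Q,R,S,T -/
noncomputable def XLet : Fin 5 → BraidAlg k :=
  ![Xg k (0,1), Xg k (1,2), Xg k (2,3), Xg k (3,4), Xg k (1,3)]

lemma A_diag (i : Fin 5) : Xg k (i, i) = 0 := by
  have h := RingQuot.mkAlgHom_rel k (BraidRel.diag (k := k) i)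
  simpa [Xg] using h

lemma A_symm (i j : Fin 5) : Xg k (i, j) = Xg k (j, i) :=
  RingQuot.mkAlgHom_rel k (BraidRel.symm i j)

lemma A_row (i : Fin 5) : ∑ j : Fin 5, Xg k (i, j) = 0 := by
  have h := RingQuot.mkAlgHom_rel k (BraidRel.rowSum (k := k) i)
  simpa [Xg, map_sum] using h

lemma A_comm (i j l m : Fin 5) (h1 : i ≠ l) (h2 : i ≠ m) (h3 : j ≠ l) (h4 : j ≠ m) :
    Xg k (i, j) * Xg k (l, m) = Xg k (l, m) * Xg k (i, j) := by
  have h := RingQuot.mkAlgHom_rel k (BraidRel.comm (k := k) i j l m h1 h2 h3 h4)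
  simpa [Xg, map_mul] using h

lemma A_row' (i : Fin 5) :
    Xg k (i, 0) + Xg k (i, 1) + Xg k (i, 2) + Xg k (i, 3) + Xg k (i, 4) = 0 := by
  have := A_row k i
  rwa [Fin.sum_univ_five] at this

lemma hX14 : Xg k (1, 4) =
    -Xg k (0,1) - Xg k (1,2) - Xg k (1,3) := by
  have h := A_row' k 1
  rw [A_diag k _, A_symm k 1 0] at h
  rw [← sub_eq_zero, ← h]
  abel

lemma hX03 : Xg k (0, 3) =
    -Xg k (1,3) - Xg k (2,3) - Xg k (3,4) := by
  have h := A_row' k 3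
  rw [A_diag k _, A_symm k 3 0, A_symm k 3 1, A_symm k 3 2] at h
  rw [← sub_eq_zero, ← h]
  abel

lemma hX02 : Xg k (0, 2) =
    -Xg k (0,1) - Xg k (1,2) + Xg k (3,4) := by
  have e0 := A_row' k 0
  have e1 := A_row' k 1
  have e2 := A_row' k 2
  have e3 := A_row' k 3
  have e4 := A_row' k 4
  rw [A_diag k _] at e0
  rw [A_diag k _, A_symm k 1 0] at e1
  rw [A_diag k _, A_symm k 2 0, A_symm k 2 1] at e2
  rw [A_diag k _, A_symm k 3 0, A_symm k 3 1, A_symm k 3 2] at e3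
  rw [A_diag k _, A_symm k 4 0, A_symm k 4 1, A_symm k 4 2, A_symm k 4 3] at e4
  set d := Xg k (0,2) + Xg k (0,1) + Xg k (1,2) - Xg k (3,4) with hd
  have key : d + d = 0 := by
    have hcomb : d + d =
        (0 + Xg k (0,1) + Xg k (0,2) + Xg k (0,3) + Xg k (0,4))
        + (Xg k (0,1) + 0 + Xg k (1,2) + Xg k (1,3) + Xg k (1,4))
        + (Xg k (0,2) + Xg k (1,2) + 0 + Xg k (2,3) + Xg k (2,4))
        - (Xg k (0,3) + Xg k (1,3) + Xg k (2,3) + 0 + Xg k (3,4))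
        - (Xg k (0,4) + Xg k (1,4) + Xg k (2,4) + Xg k (3,4) + 0) := by
      rw [hd]; abel
    rw [hcomb, e0, e1, e2, e3, e4]
    simp
  have key2 : (2 : k) • d = 0 := by rw [two_smul]; exact key
  have hd0 : d = 0 := by
    have := congrArg (fun z => ((2 : k)⁻¹) • z) key2
    simpa [inv_smul_smul₀ (two_ne_zero (α := k))] using this
  rw [← sub_eq_zero, ← hd0, hd]
  abel

lemma hX24 : Xg k (2, 4) =
    Xg k (0,1) - Xg k (2,3) - Xg k (3,4) := by
  have e2 := A_row' k 2
  rw [A_diag k _, A_symm k 2 0, A_symm k 2 1] at e2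
  rw [hX02] at e2
  rw [← sub_eq_zero, ← e2]
  abel

lemma hX04 : Xg k (0, 4) =
    Xg k (1,2) + Xg k (1,3) + Xg k (2,3) := by
  have e0 := A_row' k 0
  rw [A_diag k _, hX02, hX03] at e0
  rw [← sub_eq_zero, ← e0]
  abel

end ASide


section ASide2

variable (k : Type*) [Field k] [CharZero k]

-- abbreviations: P Q R S T
local notation "PA" => Xg k (0,1)
local notation "QA" => Xg k (1,2)
local notation "RA" => Xg k (2,3)
local notation "SA" => Xg k (3,4)
local notation "TA" => Xg k (1,3)

lemma relPR : PA * RA = RA * PA := A_comm k 0 1 2 3 (by decide) (by decide) (by decide) (by decide)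
lemma relPS : PA * SA = SA * PA := A_comm k 0 1 3 4 (by decide) (by decide) (by decide) (by decide)
lemma relQS : QA * SA = SA * QA := A_comm k 1 2 3 4 (by decide) (by decide) (by decide) (by decide)

lemma relQT : QA * TA = TA * QA + TA * RA - RA * TA := by
  have h := A_comm k 0 4 1 3 (by decide) (by decide) (by decide) (by decide)
  rw [hX04] at h
  rw [← sub_eq_zero]
  have hcomb : QA * TA - (TA * QA + TA * RA - RA * TA) =
      (QA + TA + RA) * TA - TA * (QA + TA + RA) := by noncomm_ring
  rw [hcomb, sub_eq_zero_of_eq h]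

lemma relQR : QA * RA = RA * QA + RA * TA - TA * RA := by
  have h := A_comm k 0 4 2 3 (by decide) (by decide) (by decide) (by decide)
  rw [hX04] at h
  rw [← sub_eq_zero]
  have hcomb : QA * RA - (RA * QA + RA * TA - TA * RA) =
      (QA + TA + RA) * RA - RA * (QA + TA + RA) := by noncomm_ring
  rw [hcomb, sub_eq_zero_of_eq h]

lemma relPT : PA * TA = TA * PA + SA * TA - TA * SA + RA * TA - TA * RA := by
  have h := A_comm k 2 4 1 3 (by decide) (by decide) (by decide) (by decide)
  rw [hX24] at h
  rw [sub_mul, sub_mul, mul_sub, mul_sub] at h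
  rw [← sub_eq_zero] at h ⊢
  rw [← h]
  abel

/-- every generator is the `cf`-combination of the five letters -/
lemma XgLin (i j : Fin 5) :
    Xg k (i, j) = ∑ b : Fin 5, (cf i j b : k) • XLet k b := by
  have h02 := hX02 k
  have h03 := hX03 k
  have h04 := hX04 k
  have h14 := hX14 k
  have h24 := hX24 k
  fin_cases i <;> fin_cases j <;>
    norm_num [XLet, cf, Fin.sum_univ_five, Matrix.cons_val_zero, Matrix.cons_val_one, Matrix.cons_val_two, Matrix.cons_val_three, Matrix.cons_val_four, Matrix.head_cons] <;>
    first
      | rfl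
      | exact A_diag k _
      | exact A_symm k _ _
      | exact h02.trans (by module)
      | exact h03.trans (by module)
      | exact h04.trans (by module)
      | exact h14.trans (by module)
      | exact h24.trans (by module)
      | exact (A_symm k _ _).trans (h02.trans (by module))
      | exact (A_symm k _ _).trans (h03.trans (by module))
      | exact (A_symm k _ _).trans (h04.trans (by module))
      | exact (A_symm k _ _).trans (h14.trans (by module))
      | exact (A_symm k _ _).trans (h24.trans (by module))

end ASide2


section Glue

variable (k : Type*) [Field k] [CharZero k]

open L5 T3 P2

lemma gOp_diag (i : Fin 5) : gOp k i i = 0 := by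
  unfold gOp
  refine Finset.sum_eq_zero fun b _ => ?_
  rw [cf_diag i b]
  simp

lemma gOp_symm (i j : Fin 5) : gOp k i j = gOp k j i := by
  unfold gOp
  exact Finset.sum_congr rfl fun b _ => by rw [cf_symm i j b]

lemma gOp_rowSum (i : Fin 5) : ∑ j : Fin 5, gOp k i j = 0 := by
  rw [Fin.sum_univ_five]
  unfold gOp
  rw [← Finset.sum_add_distrib, ← Finset.sum_add_distrib, ← Finset.sum_add_distrib,
    ← Finset.sum_add_distrib]
  refine Finset.sum_eq_zero fun b _ => ?_
  rw [← add_smul, ← add_smul, ← add_smul, ← add_smul]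
  have h : ((cf i 0 b : k)) + cf i 1 b + cf i 2 b + cf i 3 b + cf i 4 b = 0 := by
    have := cf_row i b
    have := congrArg (fun z : ℤ => (z : k)) this
    push_cast at this
    simpa using this
  rw [h, zero_smul]

noncomputable def Phi : FreeAlgebra k (Fin 5 × Fin 5) →ₐ[k] Module.End k (FMod k) :=
  FreeAlgebra.lift k (fun p => gOp k p.1 p.2)

lemma Phi_rel : ∀ ⦃a b : FreeAlgebra k (Fin 5 × Fin 5)⦄, BraidRel k a b → Phi k a = Phi k b := by
  intro a b h
  cases h with
  | diag i => simpa [Phi] using gOp_diag k i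
  | symm i j => simpa [Phi] using gOp_symm k i j
  | rowSum i => simpa [Phi, map_sum] using gOp_rowSum k i
  | comm i j l m h1 h2 h3 h4 =>
      simpa [Phi, map_mul] using gOp_comm k i j l m h1 h2 h3 h4

noncomputable def Psi : BraidAlg k →ₐ[k] Module.End k (FMod k) :=
  RingQuot.liftAlgHom k ⟨Phi k, Phi_rel k⟩

lemma Psi_Xg (p : Fin 5 × Fin 5) : Psi k (Xg k p) = gOp k p.1 p.2 := by
  rw [Xg, Psi, RingQuot.liftAlgHom_mkAlgHom_apply]
  simp [Phi]

/-- decode letters -/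
def decT : T3 → L5 | .t => .x24 | .r => .x34 | .s => .x45
def decP : P2 → L5 | .p => .x12 | .q => .x23

noncomputable def phiF : FMod k →ₗ[k] BraidAlg k :=
  Finsupp.lift (BraidAlg k) k NIdx (fun x => wordToA k (x.1.map decT ++ x.2.map decP))

@[simp] lemma phiF_single (x : NIdx) (c : k) :
    phiF k (Finsupp.single x c) = c • wordToA k (x.1.map decT ++ x.2.map decP) := by
  simp [phiF]

lemma wordToA_cons (l : L5) (W : List L5) :
    wordToA k (l :: W) = Xg k l.toPair * wordToA k W := by
  simp [wordToA]

lemma wordToA_nil : wordToA k [] = 1 := rfl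

/-- ring helpers -/
lemma ring_helper1 {A : Type*} [Ring A] (x y w : A) (h : x * y = y * x) :
    x * (y * w) = y * (x * w) := by
  rw [← mul_assoc, h, mul_assoc]

lemma ring_helper2 {A : Type*} [Ring A] (P T S R w : A)
    (h : P * T = T * P + S * T - T * S + R * T - T * R) :
    T * (P * w) + S * (T * w) - T * (S * w) + R * (T * w) - T * (R * w) = P * (T * w) := by
  have h2 : T * (P * w) + S * (T * w) - T * (S * w) + R * (T * w) - T * (R * w)
      = (T * P + S * T - T * S + R * T - T * R) * w := by noncomm_ring
  rw [h2, ← h, mul_assoc]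

lemma ring_helper3 {A : Type*} [Ring A] (Q T R w : A)
    (h : Q * T = T * Q + T * R - R * T) :
    T * (Q * w) + T * (R * w) - R * (T * w) = Q * (T * w) := by
  have h2 : T * (Q * w) + T * (R * w) - R * (T * w)
      = (T * Q + T * R - R * T) * w := by noncomm_ring
  rw [h2, ← h, mul_assoc]

lemma phi_consT (a : T3) (f : FMod k) :
    phiF k (consT k a f) = Xg k (decT a).toPair * phiF k f := by
  have : phiF k ∘ₗ consT k a
      = (LinearMap.mulLeft k (Xg k (decT a).toPair)) ∘ₗ phiF k := by
    ext x : 2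
    simp [wordToA_cons, mul_smul_comm]
  exact DFunLike.congr_fun this f

lemma phi_pushP (U : List T3) (V : List P2) :
    phiF k (pushP k U V) = Xg k (0,1) * wordToA k (U.map decT ++ V.map decP) := by
  induction U with
  | nil => simp [pushP, wordToA_cons, decP, L5.toPair]
  | cons a U ih =>
    cases a with
    | r =>
      rw [show pushP k (T3.r :: U) V = consT k T3.r (pushP k U V) from rfl,
        phi_consT, ih, List.map_cons, List.cons_append, wordToA_cons]
      exact ring_helper1 _ _ _ (relPR k).symm
    | s =>
      rw [show pushP k (T3.s :: U) V = consT k T3.s (pushP k U V) from rfl,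
        phi_consT, ih, List.map_cons, List.cons_append, wordToA_cons]
      exact ring_helper1 _ _ _ (relPS k).symm
    | t =>
      rw [show pushP k (T3.t :: U) V = consT k T3.t (pushP k U V)
          + Finsupp.single (T3.s :: T3.t :: U, V) 1 - Finsupp.single (T3.t :: T3.s :: U, V) 1
          + Finsupp.single (T3.r :: T3.t :: U, V) 1 - Finsupp.single (T3.t :: T3.r :: U, V) 1
          from rfl]
      rw [map_sub, map_add, map_sub, map_add, phi_consT, ih]
      simp only [phiF_single, one_smul, List.map_cons, List.cons_append, wordToA_cons]
      exact ring_helper2 _ _ _ _ _ (relPT k)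

lemma phi_pushQ (U : List T3) (V : List P2) :
    phiF k (pushQ k U V) = Xg k (1,2) * wordToA k (U.map decT ++ V.map decP) := by
  induction U with
  | nil => simp [pushQ, wordToA_cons, decP, L5.toPair]
  | cons a U ih =>
    cases a with
    | s =>
      rw [show pushQ k (T3.s :: U) V = consT k T3.s (pushQ k U V) from rfl,
        phi_consT, ih, List.map_cons, List.cons_append, wordToA_cons]
      exact ring_helper1 _ _ _ (relQS k).symm
    | t =>
      rw [show pushQ k (T3.t :: U) V = consT k T3.t (pushQ k U V)
          + Finsupp.single (T3.t :: T3.r :: U, V) 1 - Finsupp.single (T3.r :: T3.t :: U, V) 1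
          from rfl]
      rw [map_sub, map_add, phi_consT, ih]
      simp only [phiF_single, one_smul, List.map_cons, List.cons_append, wordToA_cons]
      exact ring_helper3 _ _ _ _ (relQT k)
    | r =>
      rw [show pushQ k (T3.r :: U) V = consT k T3.r (pushQ k U V)
          + Finsupp.single (T3.r :: T3.t :: U, V) 1 - Finsupp.single (T3.t :: T3.r :: U, V) 1
          from rfl]
      rw [map_sub, map_add, phi_consT, ih]
      simp only [phiF_single, one_smul, List.map_cons, List.cons_append, wordToA_cons]
      exact ring_helper3 _ _ _ _ (relQR k)

lemma phi_EL_gen (O : Module.End k (FMod k)) (X : BraidAlg k)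
    (h : ∀ x : NIdx, phiF k (O (Finsupp.single x 1))
      = X * wordToA k (x.1.map decT ++ x.2.map decP)) (f : FMod k) :
    phiF k (O f) = X * phiF k f := by
  have key : phiF k ∘ₗ O = (LinearMap.mulLeft k X) ∘ₗ phiF k := by
    ext x : 2
    simp only [LinearMap.comp_apply, Finsupp.lsingle_apply, LinearMap.mulLeft_apply,
      phiF_single, one_smul]
    exact h x
  exact DFunLike.congr_fun key f

lemma phi_EL (b : Fin 5) (f : FMod k) :
    phiF k (EL k b f) = XLet k b * phiF k f := by
  fin_cases b
  · refine phi_EL_gen k (opP k) _ (fun x => ?_) f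
    rw [show (opP k) (Finsupp.single x 1) = pushP k x.1 x.2 from by rw [opP_single, one_smul]]
    exact phi_pushP k x.1 x.2
  · refine phi_EL_gen k (opQ k) _ (fun x => ?_) f
    rw [show (opQ k) (Finsupp.single x 1) = pushQ k x.1 x.2 from by rw [opQ_single, one_smul]]
    exact phi_pushQ k x.1 x.2
  · refine phi_EL_gen k (consT k T3.r) _ (fun x => ?_) f
    rw [consT_single, phiF_single, one_smul, List.map_cons, List.cons_append, wordToA_cons]
    rfl
  · refine phi_EL_gen k (consT k T3.s) _ (fun x => ?_) f
    rw [consT_single, phiF_single, one_smul, List.map_cons, List.cons_append, wordToA_cons]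
    rfl
  · refine phi_EL_gen k (consT k T3.t) _ (fun x => ?_) f
    rw [consT_single, phiF_single, one_smul, List.map_cons, List.cons_append, wordToA_cons]
    rfl

lemma phi_gOp (i j : Fin 5) (f : FMod k) :
    phiF k (gOp k i j f) = Xg k (i, j) * phiF k f := by
  rw [XgLin k i j]
  unfold gOp
  rw [LinearMap.sum_apply, map_sum, Finset.sum_mul]
  refine Finset.sum_congr rfl fun b _ => ?_
  rw [LinearMap.smul_apply, map_smul, phi_EL, smul_mul_assoc]

lemma adjoin_top : Algebra.adjoin k (Set.range (Xg k)) = ⊤ := by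
  have h1 : Set.range (Xg k)
      = ⇑(RingQuot.mkAlgHom k (BraidRel k)) '' Set.range (FreeAlgebra.ι k) := by
    rw [← Set.range_comp]
    rfl
  rw [h1, ← AlgHom.map_adjoin, FreeAlgebra.adjoin_range_ι, Algebra.map_top]
  rw [AlgHom.range_eq_top]
  exact RingQuot.mkAlgHom_surjective k _

lemma phi_Psi (a : BraidAlg k) : ∀ f : FMod k, phiF k (Psi k a f) = a * phiF k f := by
  have ha : a ∈ Algebra.adjoin k (Set.range (Xg k)) := by rw [adjoin_top]; trivial
  induction ha using Algebra.adjoin_induction with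
  | mem x hx =>
    obtain ⟨p, rfl⟩ := hx
    intro f
    rw [Psi_Xg]
    exact (phi_gOp k p.1 p.2 f).trans (by rw [Prod.mk.eta])
  | algebraMap r =>
    intro f
    rw [AlgHom.commutes]
    rw [Module.algebraMap_end_apply, map_smul, Algebra.smul_def]
  | add x y hx hy ihx ihy =>
    intro f
    simp [map_add, LinearMap.add_apply, ihx f, ihy f, add_mul]
  | mul x y hx hy ihx ihy =>
    intro f
    rw [map_mul, Module.End.mul_apply, ihx, ihy, mul_assoc]

end Glue


section Inv

variable (k : Type*) [Field k] [CharZero k]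

open L5 T3 P2

noncomputable def epsF : FMod k := Finsupp.single ([], []) 1

lemma phiF_eps : phiF k (epsF k) = 1 := by
  rw [epsF, phiF_single]
  simp [wordToA_nil]

lemma g01 : gOp k 0 1 = EL k 0 := by
  unfold gOp; rw [Fin.sum_univ_five]; norm_num [cf, Matrix.vecHead, Matrix.vecTail, Matrix.cons_val_zero, Matrix.cons_val_one, Matrix.cons_val_two, Matrix.cons_val_three, Matrix.cons_val_four, Matrix.head_cons]
lemma g12 : gOp k 1 2 = EL k 1 := by
  unfold gOp; rw [Fin.sum_univ_five]; norm_num [cf, Matrix.vecHead, Matrix.vecTail, Matrix.cons_val_zero, Matrix.cons_val_one, Matrix.cons_val_two, Matrix.cons_val_three, Matrix.cons_val_four, Matrix.head_cons]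
lemma g23 : gOp k 2 3 = EL k 2 := by
  unfold gOp; rw [Fin.sum_univ_five]; norm_num [cf, Matrix.vecHead, Matrix.vecTail, Matrix.cons_val_zero, Matrix.cons_val_one, Matrix.cons_val_two, Matrix.cons_val_three, Matrix.cons_val_four, Matrix.head_cons]
lemma g34 : gOp k 3 4 = EL k 3 := by
  unfold gOp; rw [Fin.sum_univ_five]; norm_num [cf, Matrix.vecHead, Matrix.vecTail, Matrix.cons_val_zero, Matrix.cons_val_one, Matrix.cons_val_two, Matrix.cons_val_three, Matrix.cons_val_four, Matrix.head_cons]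
lemma g13 : gOp k 1 3 = EL k 4 := by
  unfold gOp; rw [Fin.sum_univ_five]; norm_num [cf, Matrix.vecHead, Matrix.vecTail, Matrix.cons_val_zero, Matrix.cons_val_one, Matrix.cons_val_two, Matrix.cons_val_three, Matrix.cons_val_four, Matrix.head_cons]

/-- index of a letter -/
def lIdx : L5 → Fin 5
  | .x12 => 0 | .x23 => 1 | .x34 => 2 | .x45 => 3 | .x24 => 4

lemma Psi_letter (l : L5) : Psi k (Xg k l.toPair) = EL k (lIdx l) := by
  rw [Psi_Xg]
  cases l with
  | x12 => exact g01 k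
  | x23 => exact g12 k
  | x34 => exact g23 k
  | x45 => exact g34 k
  | x24 => exact g13 k

lemma psi_word_P (V : List P2) :
    Psi k (wordToA k (V.map decP)) (epsF k) = Finsupp.single ([], V) 1 := by
  induction V with
  | nil =>
    simp only [List.map_nil, wordToA_nil, map_one, Module.End.one_apply]
    rfl
  | cons b V ih =>
    rw [List.map_cons, wordToA_cons, map_mul, Module.End.mul_apply, ih, Psi_letter]
    cases b with
    | p =>
      rw [show lIdx (decP P2.p) = 0 from rfl, show EL k 0 = opP k from rfl, opP_single, one_smul]
      simp [pushP]
    | q =>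
      rw [show lIdx (decP P2.q) = 1 from rfl, show EL k 1 = opQ k from rfl, opQ_single, one_smul]
      simp [pushQ]

lemma psi_word (U : List T3) (V : List P2) :
    Psi k (wordToA k (U.map decT ++ V.map decP)) (epsF k) = Finsupp.single (U, V) 1 := by
  induction U with
  | nil => simpa using psi_word_P k V
  | cons a U ih =>
    rw [List.map_cons, List.cons_append, wordToA_cons, map_mul, Module.End.mul_apply, ih,
      Psi_letter]
    cases a with
    | t => rw [show lIdx (decT T3.t) = 4 from rfl, show EL k 4 = consT k T3.t from rfl,
        consT_single]
    | r => rw [show lIdx (decT T3.r) = 2 from rfl, show EL k 2 = consT k T3.r from rfl,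
        consT_single]
    | s => rw [show lIdx (decT T3.s) = 3 from rfl, show EL k 3 = consT k T3.s from rfl,
        consT_single]

noncomputable def psiL : BraidAlg k →ₗ[k] FMod k where
  toFun a := Psi k a (epsF k)
  map_add' a b := by simp
  map_smul' c a := by simp

lemma psiL_apply (a : BraidAlg k) : psiL k a = Psi k a (epsF k) := rfl

noncomputable def eqFA : FMod k ≃ₗ[k] BraidAlg k :=
  LinearEquiv.ofLinear (phiF k) (psiL k)
    (by
      ext a
      simp only [LinearMap.comp_apply, LinearMap.id_apply, psiL_apply]
      rw [phi_Psi k a (epsF k), phiF_eps, mul_one])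
    (by
      ext x : 2
      simp only [LinearMap.comp_apply, Finsupp.lsingle_apply, LinearMap.id_apply, psiL_apply,
        phiF_single, one_smul, map_smul]
      rw [psi_word k x.1 x.2]
      )

noncomputable def NBasis : Module.Basis NIdx k (BraidAlg k) := Module.Basis.ofRepr (eqFA k).symm

lemma NBasis_apply (x : NIdx) :
    NBasis k x = wordToA k (x.1.map decT ++ x.2.map decP) := by
  rw [NBasis, Module.Basis.coe_ofRepr]
  simp only [LinearEquiv.symm_symm]
  rw [show (eqFA k) (Finsupp.single x 1) = phiF k (Finsupp.single x 1) from rfl,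
    phiF_single, one_smul]

lemma NBasis_repr (a : BraidAlg k) (x : NIdx) :
    (NBasis k).repr a x = Psi k a (epsF k) x := rfl

end Inv


section Fin4

variable (k : Type*) [Field k] [CharZero k]

open L5 T3 P2

/-- the image of ℤ in k -/
def RInt : Subring k := (Int.castRingHom k).range

/-- integer coefficients -/
def IntF (f : FMod k) : Prop := ∀ x, f x ∈ RInt k

def lenN (x : NIdx) : ℕ := x.1.length + x.2.length

/-- homogeneous of degree n with integer coefficients -/
def GoodF (n : ℕ) (f : FMod k) : Prop :=
  IntF k f ∧ ∀ x : NIdx, f x ≠ 0 → lenN x = n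

lemma GoodF_of_eq {n m : ℕ} {f : FMod k} (h : n = m) (hf : GoodF k n f) : GoodF k m f :=
  h ▸ hf

lemma GoodF_single (y : NIdx) : GoodF k (lenN y) (Finsupp.single y 1) := by
  classical
  constructor
  · intro x
    rw [Finsupp.single_apply]
    split_ifs
    · exact ⟨1, by simp⟩
    · exact zero_mem _
  · intro x hx
    rw [Finsupp.single_apply] at hx
    split_ifs at hx with hh
    · rw [← hh]
    · simp at hx

lemma GoodF_add {n : ℕ} {f g : FMod k} (hf : GoodF k n f) (hg : GoodF k n g) :
    GoodF k n (f + g) := by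
  refine ⟨fun x => ?_, fun x hx => ?_⟩
  · rw [Finsupp.add_apply]; exact add_mem (hf.1 x) (hg.1 x)
  · rw [Finsupp.add_apply] at hx
    by_cases h1 : f x = 0
    · exact hg.2 x (by rw [h1, zero_add] at hx; exact hx)
    · exact hf.2 x h1

lemma GoodF_sub {n : ℕ} {f g : FMod k} (hf : GoodF k n f) (hg : GoodF k n g) :
    GoodF k n (f - g) := by
  refine ⟨fun x => ?_, fun x hx => ?_⟩
  · rw [Finsupp.sub_apply]; exact sub_mem (hf.1 x) (hg.1 x)
  · rw [Finsupp.sub_apply] at hx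
    by_cases h1 : f x = 0
    · refine hg.2 x fun h2 => ?_
      rw [h1, h2, sub_zero] at hx
      exact hx rfl
    · exact hf.2 x h1

lemma consT_inj (a : T3) : Function.Injective (fun x : NIdx => (a :: x.1, x.2)) := by
  intro x y h
  simp only [Prod.mk.injEq, List.cons.injEq] at h
  exact Prod.ext h.1.2 h.2

lemma GoodF_consT {n : ℕ} {f : FMod k} (a : T3) (hf : GoodF k n f) :
    GoodF k (n + 1) (consT k a f) := by
  classical
  constructor
  · intro x
    rw [consT, Finsupp.lmapDomain_apply]
    by_cases h : x ∈ Set.range (fun y : NIdx => (a :: y.1, y.2))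
    · obtain ⟨y, rfl⟩ := h
      rw [Finsupp.mapDomain_apply (consT_inj a)]
      exact hf.1 y
    · rw [Finsupp.mapDomain_notin_range _ _ h]
      exact zero_mem _
  · intro x hx
    rw [consT, Finsupp.lmapDomain_apply] at hx
    by_cases h : x ∈ Set.range (fun y : NIdx => (a :: y.1, y.2))
    · obtain ⟨y, rfl⟩ := h
      rw [Finsupp.mapDomain_apply (consT_inj a)] at hx
      have h2 := hf.2 y hx
      simp only [lenN, List.length_cons] at h2 ⊢
      omega
    · rw [Finsupp.mapDomain_notin_range _ _ h] at hx
      exact absurd rfl hx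

lemma GoodF_pushP (U : List T3) (V : List P2) :
    GoodF k (U.length + V.length + 1) (pushP k U V) := by
  induction U with
  | nil =>
    refine GoodF_of_eq k ?_ (GoodF_single k ([], P2.p :: V))
    simp [lenN]
  | cons a U ih =>
    cases a with
    | r =>
      refine GoodF_of_eq k ?_ (GoodF_consT k T3.r ih)
      simp only [List.length_cons]; omega
    | s =>
      refine GoodF_of_eq k ?_ (GoodF_consT k T3.s ih)
      simp only [List.length_cons]; omega
    | t =>
      rw [show pushP k (T3.t :: U) V = consT k T3.t (pushP k U V)
          + Finsupp.single (T3.s :: T3.t :: U, V) 1 - Finsupp.single (T3.t :: T3.s :: U, V) 1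
          + Finsupp.single (T3.r :: T3.t :: U, V) 1 - Finsupp.single (T3.t :: T3.r :: U, V) 1
          from rfl]
      have e : ∀ b c : T3, GoodF k ((T3.t :: U).length + V.length + 1)
          (Finsupp.single (b :: c :: U, V) (1 : k)) := fun b c => by
        refine GoodF_of_eq k ?_ (GoodF_single k (b :: c :: U, V))
        simp only [lenN, List.length_cons]; omega
      refine GoodF_sub k (GoodF_add k (GoodF_sub k (GoodF_add k ?_ (e _ _)) (e _ _)) (e _ _)) (e _ _)
      refine GoodF_of_eq k ?_ (GoodF_consT k T3.t ih)
      simp only [List.length_cons]; omega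

lemma GoodF_pushQ (U : List T3) (V : List P2) :
    GoodF k (U.length + V.length + 1) (pushQ k U V) := by
  induction U with
  | nil =>
    refine GoodF_of_eq k ?_ (GoodF_single k ([], P2.q :: V))
    simp [lenN]
  | cons a U ih =>
    cases a with
    | s =>
      refine GoodF_of_eq k ?_ (GoodF_consT k T3.s ih)
      simp only [List.length_cons]; omega
    | t =>
      rw [show pushQ k (T3.t :: U) V = consT k T3.t (pushQ k U V)
          + Finsupp.single (T3.t :: T3.r :: U, V) 1 - Finsupp.single (T3.r :: T3.t :: U, V) 1
          from rfl]
      have e : ∀ b c : T3, GoodF k ((T3.t :: U).length + V.length + 1)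
          (Finsupp.single (b :: c :: U, V) (1 : k)) := fun b c => by
        refine GoodF_of_eq k ?_ (GoodF_single k (b :: c :: U, V))
        simp only [lenN, List.length_cons]; omega
      refine GoodF_sub k (GoodF_add k ?_ (e _ _)) (e _ _)
      refine GoodF_of_eq k ?_ (GoodF_consT k T3.t ih)
      simp only [List.length_cons]; omega
    | r =>
      rw [show pushQ k (T3.r :: U) V = consT k T3.r (pushQ k U V)
          + Finsupp.single (T3.r :: T3.t :: U, V) 1 - Finsupp.single (T3.t :: T3.r :: U, V) 1
          from rfl]
      have e : ∀ b c : T3, GoodF k ((T3.r :: U).length + V.length + 1)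
          (Finsupp.single (b :: c :: U, V) (1 : k)) := fun b c => by
        refine GoodF_of_eq k ?_ (GoodF_single k (b :: c :: U, V))
        simp only [lenN, List.length_cons]; omega
      refine GoodF_sub k (GoodF_add k ?_ (e _ _)) (e _ _)
      refine GoodF_of_eq k ?_ (GoodF_consT k T3.r ih)
      simp only [List.length_cons]; omega

lemma GoodF_lift {n : ℕ} {f : FMod k} (g : NIdx → FMod k)
    (hg : ∀ x : NIdx, GoodF k (lenN x + 1) (g x)) (hf : GoodF k n f) :
    GoodF k (n + 1) ((Finsupp.lift (FMod k) k NIdx g) f) := by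
  classical
  have happ : ∀ y, ((Finsupp.lift (FMod k) k NIdx g) f) y
      = ∑ x ∈ f.support, f x * (g x) y := by
    intro y
    rw [Finsupp.lift_apply, Finsupp.sum_apply, Finsupp.sum]
    exact Finset.sum_congr rfl fun x _ => by rw [Finsupp.smul_apply, smul_eq_mul]
  constructor
  · intro y
    rw [happ]
    exact sum_mem fun x _ => mul_mem (hf.1 x) ((hg x).1 y)
  · intro y hy
    by_contra hne
    apply hy
    rw [happ]
    refine Finset.sum_eq_zero fun x hx => ?_
    have hfx : f x ≠ 0 := Finsupp.mem_support_iff.mp hx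
    have hlx : lenN x = n := hf.2 x hfx
    have hz : (g x) y = 0 := by
      by_contra hgz
      have h3 := (hg x).2 y hgz
      rw [hlx] at h3
      exact hne h3
    rw [hz, mul_zero]

lemma GoodF_EL {n : ℕ} {f : FMod k} (b : Fin 5) (hf : GoodF k n f) :
    GoodF k (n + 1) (EL k b f) := by
  fin_cases b
  · refine GoodF_lift k _ (fun x => ?_) hf
    refine GoodF_of_eq k ?_ (GoodF_pushP k x.1 x.2)
    rfl
  · refine GoodF_lift k _ (fun x => ?_) hf
    refine GoodF_of_eq k ?_ (GoodF_pushQ k x.1 x.2)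
    rfl
  · exact GoodF_consT k T3.r hf
  · exact GoodF_consT k T3.s hf
  · exact GoodF_consT k T3.t hf

lemma psi_good (W : List L5) :
    GoodF k W.length (Psi k (wordToA k W) (epsF k)) := by
  induction W with
  | nil =>
    rw [wordToA_nil, map_one]
    exact GoodF_single k ([], [])
  | cons l W ih =>
    rw [wordToA_cons, map_mul, Module.End.mul_apply, Psi_letter, List.length_cons]
    exact GoodF_EL k (lIdx l) ih

end Fin4


section FinalStuff

variable (k : Type*) [Field k] [CharZero k]

open L5 T3 P2

def encT : L5 → T3 | .x24 => .t | .x34 => .r | .x45 => .s | _ => .t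
def encP : L5 → P2 | .x12 => .p | _ => .q

lemma decT_encT (U : List T3) : (U.map decT).map encT = U := by
  induction U with
  | nil => rfl
  | cons a U ih => cases a <;> simp [decT, encT, ih]

lemma decP_encP (V : List P2) : (V.map decP).map encP = V := by
  induction V with
  | nil => rfl
  | cons a V ih => cases a <;> simp [decP, encP, ih]

lemma encT_decT (l : List L5) (h : ∀ a ∈ l, a = L5.x24 ∨ a = L5.x34 ∨ a = L5.x45) :
    (l.map encT).map decT = l := by
  induction l with
  | nil => rfl
  | cons a l ih =>
    have ha := h a List.mem_cons_self
    have h2 := ih (fun b hb => h b (List.mem_cons_of_mem a hb))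
    rcases ha with rfl | rfl | rfl <;> simp [encT, decT, h2]

lemma encP_decP (l : List L5) (h : ∀ a ∈ l, a = L5.x12 ∨ a = L5.x23) :
    (l.map encP).map decP = l := by
  induction l with
  | nil => rfl
  | cons a l ih =>
    have ha := h a List.mem_cons_self
    have h2 := ih (fun b hb => h b (List.mem_cons_of_mem a hb))
    rcases ha with rfl | rfl <;> simp [encP, decP, h2]

def eNI : NIdx ≃ I4 where
  toFun x := ⟨(x.1.map decT, x.2.map decP),
    ⟨fun a ha => by obtain ⟨b, _, rfl⟩ := List.mem_map.mp ha; cases b <;> simp [decT],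
     fun a ha => by obtain ⟨b, _, rfl⟩ := List.mem_map.mp ha; cases b <;> simp [decP]⟩⟩
  invFun p := (p.1.1.map encT, p.1.2.map encP)
  left_inv x := by
    obtain ⟨U, V⟩ := x
    exact Prod.ext (decT_encT U) (decP_encP V)
  right_inv p := by
    obtain ⟨⟨U, V⟩, hU, hV⟩ := p
    exact Subtype.ext (Prod.ext (encT_decT U hU) (encP_decP V hV))

noncomputable def B4 : Module.Basis I4 k (BraidAlg k) := (NBasis k).reindex eNI

lemma B4_apply (p : I4) : B4 k p = wordToA k (p.1.1 ++ p.1.2) := by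
  rw [B4, Module.Basis.reindex_apply, NBasis_apply]
  obtain ⟨⟨U, V⟩, hU, hV⟩ := p
  rw [show (eNI.symm ⟨(U, V), ⟨hU, hV⟩⟩ : NIdx) = (U.map encT, V.map encP) from rfl]
  exact congrArg (wordToA k) (congrArg₂ (· ++ ·) (encT_decT U hU) (encP_decP V hV))

lemma B4_repr (a : BraidAlg k) (p : I4) :
    (B4 k).repr a p = Psi k a (epsF k) (eNI.symm p) := by
  rw [B4, Module.Basis.repr_reindex_apply]
  rfl

lemma wordToA_eq (W : List L5) : wordToA k W = wordToAgen k (W.map L5.toPair) := by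
  rw [wordToAgen, List.map_map]
  rfl

lemma wordToA_mem_grade (W : List L5) : wordToA k W ∈ Agrade k W.length := by
  rw [wordToA_eq]
  exact Submodule.subset_span ⟨W.map L5.toPair, by simp, rfl⟩

/-- the empty index -/
def peI : I4 := ⟨([], []), ⟨fun a ha => by simp at ha, fun a ha => by simp at ha⟩⟩

lemma eNI_symm_pe : (eNI.symm peI : NIdx) = ([], []) := rfl

lemma B4_pe : B4 k peI = 1 := by
  rw [B4_apply]
  rfl

lemma listEq {α : Type*} (W : List α) (n : ℕ) (h : W.length = n) :
    ∃ v : Fin n → α, List.ofFn v = W := by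
  subst h
  exact ⟨W.get, List.ofFn_get W⟩

lemma finsum_formula (Z : Word → k) (p : I4) :
    (∑ᶠ W : List L5, (B4 k).repr (wordToA k W) p * C5 Z W)
      = ∑ v : Fin (lenN (eNI.symm p)) → L5,
          (B4 k).repr (wordToA k (List.ofFn v)) p * C5 Z (List.ofFn v) := by
  classical
  set n := lenN (eNI.symm p) with hn
  have hsub : Function.support (fun W : List L5 => (B4 k).repr (wordToA k W) p * C5 Z W)
      ⊆ ↑(Finset.univ.image (fun v : Fin n → L5 => List.ofFn v)) := by
    intro W hW
    have hW' : (B4 k).repr (wordToA k W) p * C5 Z W ≠ 0 := hW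
    have hc : (B4 k).repr (wordToA k W) p ≠ 0 := by
      intro hc0
      rw [hc0, zero_mul] at hW'
      exact hW' rfl
    rw [B4_repr] at hc
    have hlen := (psi_good k W).2 _ hc
    obtain ⟨v, rfl⟩ := listEq W n (by rw [hn, hlen])
    simp only [Finset.coe_image, Finset.coe_univ, Set.image_univ]
    exact ⟨v, rfl⟩
  rw [finsum_eq_finset_sum_of_support_subset _ hsub]
  rw [Finset.sum_image (fun a _ b _ h => List.ofFn_injective h)]

end FinalStuff


/-- The elements `1` and the images of the monomials `U·V` (with `U` a
word in `X₂₄,X₃₄,X₄₅` and `V` a word in `X₁₂,X₂₃`) form a homogeneous basis `B₄` of the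
braid algebra, the coordinates `l_{b₄,W}` of words `W ∈ 𝔸₅` in this basis are integers,
and the pentagon relation holds if and only if `Σ_{W ∈ 𝔸₅} l_{b₄,W}·C_{5,W} = 0` for every
`b₄ ∈ B₄` with `b₄ ≠ 1`. -/
theorem statement4 {k : Type*} [Field k] [CharZero k] (Z : Word → k) (hZ : Z [] = 1) :
    ∃ B : Module.Basis I4 k (BraidAlg k),
      (∀ p : I4, B p = wordToA k (p.1.1 ++ p.1.2)) ∧
      (∀ p : I4, B p ∈ Agrade k (p.1.1.length + p.1.2.length)) ∧
      (∀ (p : I4) (W : List L5), ∃ m : ℤ, (B.repr (wordToA k W)) p = (m : k)) ∧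
      (PentagonHolds k Z ↔
        ∀ p : I4, B p ≠ 1 →
          (∑ᶠ W : List L5, (B.repr (wordToA k W)) p * C5 Z W) = 0) := by
  classical
  refine ⟨B4 k, fun p => B4_apply k p, ?_, ?_, ?_⟩
  · intro p
    rw [B4_apply]
    have hg := wordToA_mem_grade k (p.1.1 ++ p.1.2)
    rwa [List.length_append] at hg
  · intro p W
    rw [B4_repr]
    obtain ⟨m, hm⟩ := (psi_good k W).1 (eNI.symm p)
    exact ⟨m, hm.symm⟩
  · constructor
    · intro hp p hBp
      have hppe : p ≠ peI := fun h => hBp (h ▸ B4_pe k)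
      have hn1 : 1 ≤ lenN (eNI.symm p) := by
        by_contra hcon
        push_neg at hcon
        have h0 : lenN (eNI.symm p) = 0 := by omega
        apply hppe
        have hu : (eNI.symm p).1 = [] := List.length_eq_zero_iff.mp (by
          unfold lenN at h0; omega)
        have hv : (eNI.symm p).2 = [] := List.length_eq_zero_iff.mp (by
          unfold lenN at h0; omega)
        have hnil : (eNI.symm p : NIdx) = (eNI.symm peI : NIdx) := by
          rw [eNI_symm_pe]
          exact Prod.ext hu hv
        have h5 := congrArg eNI hnil
        rwa [Equiv.apply_symm_apply, Equiv.apply_symm_apply] at h5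
      have h0 := hp (lenN (eNI.symm p)) hn1
      have h2 := congrArg (fun a => (((B4 k).repr) a) p) h0
      simp only [map_sum, map_smul, Finset.sum_apply', Finsupp.smul_apply, smul_eq_mul,
        map_zero, Finsupp.coe_zero, Pi.zero_apply] at h2
      rw [finsum_formula k Z p]
      exact (Finset.sum_congr rfl fun v _ => mul_comm _ _).trans h2
    · intro h n hn
      refine (B4 k).repr.injective ?_
      rw [map_zero]
      ext p
      simp only [map_sum, map_smul, Finset.sum_apply', Finsupp.smul_apply, smul_eq_mul,
        Finsupp.coe_zero, Pi.zero_apply]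
      by_cases hpe : p = peI
      · subst hpe
        refine Finset.sum_eq_zero fun v _ => ?_
        have hz : ((B4 k).repr (wordToA k (List.ofFn v))) peI = 0 := by
          by_contra hc
          rw [B4_repr] at hc
          have hlen := (psi_good k _).2 _ hc
          rw [List.length_ofFn] at hlen
          rw [show lenN (eNI.symm peI) = 0 from rfl] at hlen
          omega
        rw [hz, mul_zero]
      · by_cases hnp : lenN (eNI.symm p) = n
        · have hBp : B4 k p ≠ 1 := fun hB1 =>
            hpe ((B4 k).injective (hB1.trans (B4_pe k).symm))
          have hfin := h p hBp
          rw [finsum_formula k Z p] at hfin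
          subst hnp
          exact (Finset.sum_congr rfl fun v _ => mul_comm _ _).trans hfin
        · refine Finset.sum_eq_zero fun v _ => ?_
          have hz : ((B4 k).repr (wordToA k (List.ofFn v))) p = 0 := by
            by_contra hc
            rw [B4_repr] at hc
            have hlen := (psi_good k _).2 _ hc
            rw [List.length_ofFn] at hlen
            exact hnp hlen
          rw [hz, mul_zero]
end

section
/- Let k be a field of characteristic 0 and let C be a function from words in {X₀,X₁} to k with C(∅) = 1 which is a shuffle character (this encodes that the series Σ_W C(W)·W is group-like) and which satisfies the 2-cycle relation: for every nonempty word W, Σ_{U₁U₂=W} C(U₁)·C(θ(U₂)) = 0. Then the coefficients satisfy the duality relations: for every word W, C(←θ(W)) = (−1)^{|W|}·C(W). -/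
open scoped BigOperators

/-- All shuffles (interleavings) of two words, with multiplicity. -/
def shuffles {α : Type*} : List α → List α → List (List α)
  | [], V => [V]
  | U, [] => [U]
  | a :: U, b :: V =>
      ((shuffles U (b :: V)).map (a :: ·)) ++ ((shuffles (a :: U) V).map (b :: ·))
termination_by U V => U.length + V.length
decreasing_by all_goals simp

lemma shuffles_nil_left {α : Type*} (V : List α) : shuffles [] V = [V] := by
  cases V <;> simp [shuffles]

lemma shuffles_nil_right {α : Type*} (U : List α) : shuffles U [] = [U] := by
  cases U <;> simp [shuffles]

lemma shuffles_cons_cons {α : Type*} (a b : α) (U V : List α) :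
    shuffles (a :: U) (b :: V) =
      ((shuffles U (b :: V)).map (a :: ·)) ++ ((shuffles (a :: U) V).map (b :: ·)) := by
  rw [shuffles]

lemma left_identity {k : Type*} [Field k] (C : Word → k)
    (hsh : ∀ U V : Word, ((shuffles U V).map C).sum = C U * C V)
    (W : Word) (hW : W ≠ []) :
    ∑ i ∈ Finset.range (W.length + 1),
      (-1 : k) ^ i * (C (W.take i).reverse * C (W.drop i)) = 0 := by
  set n := W.length with hn
  have hn0 : 0 < n := List.length_pos_iff.mpr hW
  set t : ℕ → k := fun i =>
    if h : i < n then
      (((shuffles (W.take i).reverse (W.drop (i + 1))).map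
        (fun L => C (W[i] :: L))).sum)
    else 0 with ht
  have htpos : ∀ i, ∀ h : i < n, t i =
      ((shuffles (W.take i).reverse (W.drop (i + 1))).map (fun L => C (W[i]'h :: L))).sum := by
    intro i h
    simp only [ht]
    rw [dif_pos h]
  have key : ∀ i ∈ Finset.range (n + 1),
      C (W.take i).reverse * C (W.drop i) = (if i = 0 then 0 else t (i - 1)) + t i := by
    intro i hi
    rw [Finset.mem_range, Nat.lt_succ_iff] at hi
    rw [← hsh]
    obtain _ | j := i
    · have ht0 : t 0 = C W := by
        rw [htpos 0 hn0]
        simp only [List.take_zero, List.reverse_nil, shuffles_nil_left, List.map_cons,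
          List.map_nil, List.sum_cons, List.sum_nil, add_zero]
        congr 1
        conv_rhs => rw [← List.drop_zero (l := W), List.drop_eq_getElem_cons hn0]
      rw [List.take_zero, List.reverse_nil, List.drop_zero, shuffles_nil_left]
      simp [ht0]
    · have hj : j < n := by omega
      have hrev : (W.take (j + 1)).reverse = W[j] :: (W.take j).reverse := by
        rw [List.take_succ]
        rw [List.getElem?_eq_getElem hj]
        simp
      have e1 : (if j + 1 = 0 then (0:k) else t (j + 1 - 1)) = t j := by simp
      rw [e1]
      rcases lt_or_eq_of_le hi with hlt | heq
      · -- j + 1 < n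
        have hdrop : W.drop (j + 1) = W[j + 1] :: W.drop (j + 2) := by
          rw [List.drop_eq_getElem_cons hlt]
        rw [htpos j hj, htpos (j + 1) hlt, hrev, hdrop, shuffles_cons_cons,
          List.map_append, List.sum_append, List.map_map, List.map_map]
        simp only [Function.comp_def]
      · -- j + 1 = n
        have hdrop : W.drop (j + 1) = [] := by
          apply List.drop_eq_nil_of_le; omega
        have htn : t (j + 1) = 0 := by
          simp only [ht]
          rw [dif_neg (by omega)]
        rw [htpos j hj, hrev, hdrop, shuffles_nil_right, shuffles_nil_right, htn]
        simp
  calc ∑ i ∈ Finset.range (n + 1), (-1 : k) ^ i * (C (W.take i).reverse * C (W.drop i))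
      = ∑ i ∈ Finset.range (n + 1),
          ((-1 : k) ^ i * (if i = 0 then 0 else t (i - 1)) + (-1 : k) ^ i * t i) := by
        refine Finset.sum_congr rfl fun i hi => ?_
        rw [key i hi, mul_add]
    _ = (∑ i ∈ Finset.range (n + 1), (-1 : k) ^ i * (if i = 0 then 0 else t (i - 1)))
        + ∑ i ∈ Finset.range (n + 1), (-1 : k) ^ i * t i := Finset.sum_add_distrib
    _ = (∑ i ∈ Finset.range n, (-1 : k) ^ (i + 1) * t i)
        + ∑ i ∈ Finset.range n, (-1 : k) ^ i * t i := by
        congr 1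
        · rw [Finset.sum_range_succ' (fun i => (-1 : k) ^ i * (if i = 0 then 0 else t (i - 1))) n]
          simp
        · rw [Finset.sum_range_succ]
          have : t n = 0 := by simp only [ht]; rw [dif_neg (by omega)]
          rw [this, mul_zero, add_zero]
    _ = 0 := by
        rw [← Finset.sum_add_distrib]
        apply Finset.sum_eq_zero
        intro i _
        rw [pow_succ]
        ring

lemma triangle_swap {M : Type*} [AddCommMonoid M] (N : ℕ) (F : ℕ → ℕ → M) :
    ∑ i ∈ Finset.range (N + 1), ∑ j ∈ Finset.range (N - i + 1), F i (i + j)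
      = ∑ m ∈ Finset.range (N + 1), ∑ i ∈ Finset.range (m + 1), F i m := by
  rw [Finset.sum_sigma', Finset.sum_sigma']
  refine Finset.sum_bij' (fun p _ => ⟨p.1 + p.2, p.1⟩) (fun q _ => ⟨q.2, q.1 - q.2⟩)
    ?_ ?_ ?_ ?_ ?_
  · rintro ⟨a, b⟩ hp
    simp only [Finset.mem_sigma, Finset.mem_range] at hp ⊢
    omega
  · rintro ⟨a, b⟩ hq
    simp only [Finset.mem_sigma, Finset.mem_range] at hq ⊢
    omega
  · intro p hp
    simp only [Finset.mem_sigma, Finset.mem_range] at hp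
    simp only [Nat.add_sub_cancel_left]
  · intro q hq
    simp only [Finset.mem_sigma, Finset.mem_range] at hq
    have : q.2 + (q.1 - q.2) = q.1 := by omega
    simp only [this]
  · intro p hp
    rfl


/-- If `C` is a shuffle character with `C(∅) = 1` (encoding that
`Σ_W C(W)·W` is group-like) satisfying the 2-cycle relation
`Σ_{U₁U₂ = W} C(U₁)·C(θ(U₂)) = 0` for every nonempty `W`, then the coefficients satisfy
the duality relations `C(←θ(W)) = (−1)^{|W|}·C(W)`. -/
theorem statement11 {k : Type*} [Field k] [CharZero k] (C : Word → k) (hC1 : C [] = 1)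
    (hsh : ∀ U V : Word, ((shuffles U V).map C).sum = C U * C V)
    (h2cyc : ∀ W : Word, W ≠ [] →
      ∑ i ∈ Finset.range (W.length + 1), C (W.take i) * C (theta (W.drop i)) = 0) :
    ∀ W : Word, C (theta W).reverse = (-1 : k) ^ W.length * C W := by

  set D : Word → k := fun U => C (theta U) with hD
  set E : Word → k := fun U => (-1 : k) ^ U.length * C U.reverse with hE
  have hCD : ∀ U : Word, ∑ i ∈ Finset.range (U.length + 1), C (U.take i) * D (U.drop i)
      = if U = [] then 1 else 0 := by
    intro U
    by_cases hU : U = []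
    · subst hU
      simp [hD, theta, hC1]
    · rw [if_neg hU]
      simpa [hD] using h2cyc U hU
  have hEC : ∀ U : Word, ∑ i ∈ Finset.range (U.length + 1), E (U.take i) * C (U.drop i)
      = if U = [] then 1 else 0 := by
    intro U
    by_cases hU : U = []
    · subst hU
      simp [hE, hC1]
    · rw [if_neg hU, ← left_identity C hsh U hU]
      refine Finset.sum_congr rfl fun i hi => ?_
      rw [Finset.mem_range, Nat.lt_succ_iff] at hi
      simp only [hE]
      rw [List.length_take, min_eq_left hi, mul_assoc]
  have hED : ∀ U : Word, E U = D U := by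
    intro U
    by_cases hU : U = []
    · subst hU
      simp [hE, hD, theta, hC1]
    set n := U.length with hn
    set F : ℕ → ℕ → k := fun i m =>
      E (U.take i) * (C ((U.drop i).take (m - i)) * D (U.drop m)) with hF
    have T1 : ∑ i ∈ Finset.range (n + 1), ∑ j ∈ Finset.range (n - i + 1), F i (i + j)
        = E U := by
      have step : ∀ i ∈ Finset.range (n + 1), ∑ j ∈ Finset.range (n - i + 1), F i (i + j)
          = E (U.take i) * (if U.drop i = [] then 1 else 0) := by
        intro i hi
        calc ∑ j ∈ Finset.range (n - i + 1), F i (i + j)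
            = E (U.take i) * ∑ j ∈ Finset.range ((U.drop i).length + 1),
                C ((U.drop i).take j) * D ((U.drop i).drop j) := by
              rw [Finset.mul_sum, List.length_drop]
              refine Finset.sum_congr rfl fun j hj => ?_
              rw [hF]
              simp only [Nat.add_sub_cancel_left, List.drop_drop]
          _ = E (U.take i) * (if U.drop i = [] then 1 else 0) := by rw [hCD]
      rw [Finset.sum_congr rfl step, Finset.sum_range_succ]
      have h1 : ∀ i ∈ Finset.range n, E (U.take i) * (if U.drop i = [] then 1 else 0) = 0 := by
        intro i hi
        rw [Finset.mem_range] at hi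
        rw [if_neg, mul_zero]
        intro hcon
        have := congrArg List.length hcon
        simp only [List.length_drop, List.length_nil] at this
        omega
      rw [Finset.sum_eq_zero h1, zero_add, List.drop_length, if_pos rfl, mul_one,
        List.take_length]
    have T2 : ∑ i ∈ Finset.range (n + 1), ∑ j ∈ Finset.range (n - i + 1), F i (i + j)
        = D U := by
      rw [triangle_swap]
      have step : ∀ m ∈ Finset.range (n + 1), ∑ i ∈ Finset.range (m + 1), F i m
          = (if m = 0 then 1 else 0) * D (U.drop m) := by
        intro m hm
        rw [Finset.mem_range, Nat.lt_succ_iff] at hm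
        have hlen : (U.take m).length = m := by
          rw [List.length_take]
          omega
        calc ∑ i ∈ Finset.range (m + 1), F i m
            = (∑ i ∈ Finset.range ((U.take m).length + 1),
                E ((U.take m).take i) * C ((U.take m).drop i)) * D (U.drop m) := by
              rw [Finset.sum_mul, hlen]
              refine Finset.sum_congr rfl fun i hi => ?_
              rw [Finset.mem_range, Nat.lt_succ_iff] at hi
              rw [hF, List.take_take, min_eq_left hi, List.drop_take, mul_assoc]
          _ = (if m = 0 then 1 else 0) * D (U.drop m) := by
              rw [hEC]
              congr 1
              simp [List.take_eq_nil_iff, hU]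
      rw [Finset.sum_congr rfl step]
      rw [Finset.sum_eq_single 0]
      · simp
      · intro m _ hm0
        rw [if_neg hm0, zero_mul]
      · intro h
        simp at h
    rw [← T1, T2]
  intro W
  have h := hED (theta W)
  simp only [hE, hD] at h
  have hlen : (theta W).length = W.length := by simp [theta]
  have hth : theta (theta W) = W := by
    simp [theta, List.map_map, Function.comp_def, Bool.not_not]
  rw [hlen, hth] at h
  have hsq : ((-1 : k) ^ W.length) * ((-1 : k) ^ W.length) = 1 := by
    rw [← pow_add]
    exact Even.neg_one_pow ⟨W.length, rfl⟩
  calc C (theta W).reverse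
      = (((-1 : k) ^ W.length) * ((-1 : k) ^ W.length)) * C (theta W).reverse := by
        rw [hsq, one_mul]
    _ = (-1 : k) ^ W.length * ((-1 : k) ^ W.length * C (theta W).reverse) := by ring
    _ = (-1 : k) ^ W.length * C W := by rw [h]
end

section
/- For every admissible word W in {X₀,X₁}, the word ←θ(W) (the reversal of the word obtained from W by exchanging X₀ and X₁) is again admissible, and the duality relation ζ(W) = ζ(←θ(W)) holds. Concretely, if W = X₀^{a₁}X₁^{b₁}X₀^{a₂}X₁^{b₂}⋯X₀^{a_s}X₁^{b_s} with all a_i, b_i ≥ 1, then ←θ(W) = X₀^{b_s}X₁^{a_s}⋯X₀^{b₁}X₁^{a₁} and the two associated nested sums are equal. -/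
open scoped BigOperators

/-- The composition `(k₁,…,k_p)` associated to a word: the admissible word
`X₀^{k₁−1}X₁ ⋯ X₀^{k_p−1}X₁` is sent to `[k₁,…,k_p]`. -/
def comp : Word → List ℕ
  | [] => []
  | false :: W =>
      match comp W with
      | [] => [1]
      | m :: ms => (m + 1) :: ms
  | true :: W => 1 :: comp W

/-- The multiple zeta value `ζ(k₁,…,k_p) = Σ_{n₁>⋯>n_p>0} 1/(n₁^{k₁}⋯n_p^{k_p})`. -/
noncomputable def zetaC (ks : List ℕ) : ℝ :=
  ∑' n : {n : Fin ks.length → ℕ //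
      (∀ i j : Fin ks.length, i < j → n j < n i) ∧ ∀ i, 0 < n i},
    ∏ i : Fin ks.length, ((n.1 i : ℝ) ^ ks.get i)⁻¹

/-- A word is admissible if it begins with `X₀` and ends with `X₁`. -/
def Admissible (W : Word) : Prop := W.head? = some false ∧ W.getLast? = some true

/-- The multiple zeta value of an admissible word. -/
noncomputable def zetaW (W : Word) : ℝ := zetaC (comp W)


noncomputable section MZVAux
open Filter Topology
open scoped ENNReal NNReal

def rr (m n : ℕ) : ℝ := (((m + n).choose m : ℕ) : ℝ)⁻¹

lemma choose_pos' (m n : ℕ) : 0 < (m + n).choose m := Nat.choose_pos (Nat.le_add_right m n)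

lemma rr_pos (m n : ℕ) : 0 < rr m n := by
  have := choose_pos' m n
  unfold rr; positivity

lemma nat_fact (m' n : ℕ) :
    (n + 1) * (m' + 1 + n).choose m' = (m' + 1) * (m' + 1 + n).choose (m' + 1) := by
  have h := Nat.choose_succ_right_eq (m' + 1 + n) m'
  have h2 : m' + 1 + n - m' = n + 1 := by omega
  rw [h2] at h
  rw [Nat.mul_comm (n+1), Nat.mul_comm (m'+1)]
  omega

lemma rr_step (m' n : ℕ) :
    rr (m' + 1) n - rr (m' + 1) (n + 1) = (m' + 1) * rr (m' + 1) (n + 1) / (n + 1) := by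
  set m := m' + 1 with hm
  have pascal : (m + (n + 1)).choose m = (m + n).choose m' + (m + n).choose m := by
    have : m + (n + 1) = (m + n) + 1 := by omega
    rw [this, Nat.choose_succ_succ' (m + n) m']
  have hfact : (n + 1) * (m + n).choose m' = m * (m + n).choose m := by
    have := nat_fact m' n
    have e : m' + 1 + n = m + n := by omega
    rw [e] at this
    rw [Nat.mul_comm (n+1), Nat.mul_comm m]
    rw [Nat.mul_comm (n+1), Nat.mul_comm (m'+1)] at this
    simp only [← hm] at this
    omega
  have hC1 : (0:ℝ) < (m + n).choose m := by exact_mod_cast choose_pos' m n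
  have hC2 : (0:ℝ) < (m + (n+1)).choose m := by exact_mod_cast choose_pos' m (n+1)
  have hp : ((m + (n + 1)).choose m : ℝ) = (m + n).choose m' + (m + n).choose m := by
    exact_mod_cast pascal
  have hf : ((n:ℝ) + 1) * (m + n).choose m' = m * (m + n).choose m := by exact_mod_cast hfact
  unfold rr
  have hn1 : (0:ℝ) < (n:ℝ) + 1 := by positivity
  field_simp
  push_cast [hp] at *
  have hm' : (m:ℝ) = m' + 1 := by rw [hm]; push_cast; ring
  rw [hm'] at hf
  nlinarith [hC1, hC2, hf, hp]

lemma rr_le (m n : ℕ) (hm : 1 ≤ m) : rr m n ≤ ((n:ℝ) + 1)⁻¹ := by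
  unfold rr
  rw [inv_le_inv₀ (by exact_mod_cast choose_pos' m n) (by positivity)]
  have h1 : (n + 1).choose n ≤ (m + n).choose n := Nat.choose_le_choose n (by omega)
  have h2 : (m + n).choose n = (m + n).choose m := by
    rw [Nat.add_comm m n, Nat.choose_symm_add, Nat.add_comm n m]
  rw [Nat.choose_succ_self_right] at h1
  rw [h2] at h1
  exact_mod_cast h1

lemma rr_tendsto (m x : ℕ) (hm : 1 ≤ m) :
    Tendsto (fun b : ℕ => rr m (x + b)) atTop (𝓝 0) := by
  refine squeeze_zero (g := fun b : ℕ => ((b:ℝ) + 1)⁻¹) (fun b => (rr_pos m (x + b)).le)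
    (fun b => le_trans (rr_le m (x + b) hm) ?_) ?_
  · rw [inv_le_inv₀ (by positivity) (by positivity)]
    push_cast; linarith
  · exact tendsto_one_div_add_atTop_nhds_zero_nat.congr (by intro b; rw [one_div])

lemma key_hasSum (m x : ℕ) (hm : 1 ≤ m) :
    HasSum (fun a : ℕ => if x < a then rr m a / a else 0) (rr m x / m) := by
  -- first the shifted telescoping sum
  have hmR : (0:ℝ) < m := by exact_mod_cast hm
  have tele : HasSum (fun b : ℕ => rr m (x + b) / m - rr m (x + (b + 1)) / m) (rr m x / m) := by
    rw [hasSum_iff_tendsto_nat_of_nonneg]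
    · have hconv : Tendsto (fun N : ℕ => rr m (x + 0) / m - rr m (x + N) / m) atTop
          (𝓝 (rr m x / m)) := by
        have := ((rr_tendsto m x hm).div_const (m:ℝ)).const_sub (rr m (x + 0) / m)
        simpa using this
      refine hconv.congr fun N => ?_
      rw [Finset.sum_range_sub' (fun b => rr m (x + b) / m) N]
    · intro b
      obtain ⟨m', rfl⟩ : ∃ m', m = m' + 1 := ⟨m - 1, by omega⟩
      have h := rr_step m' (x + b)
      have e : x + (b + 1) = (x + b) + 1 := by ring
      rw [e]
      have hpos : (0:ℝ) ≤ ((m':ℝ) + 1) * rr (m' + 1) (x + b + 1) / ((x + b : ℕ) + 1) := by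
        have := rr_pos (m' + 1) (x + b + 1)
        positivity
      have hd : rr (m' + 1) (x + b + 1) ≤ rr (m' + 1) (x + b) := by linarith
      exact sub_nonneg.mpr (by gcongr)
  -- rewrite the telescoping terms
  have tele2 : HasSum (fun b : ℕ => rr m (b + (x + 1)) / ((b + (x + 1) : ℕ) : ℝ)) (rr m x / m) := by
    refine tele.congr_fun fun b => ?_
    obtain ⟨m', rfl⟩ : ∃ m', m = m' + 1 := ⟨m - 1, by omega⟩
    have h := rr_step m' (x + b)
    have e : x + (b + 1) = (x + b) + 1 := by ring
    rw [e]
    have hx1 : (0:ℝ) < ((x + b : ℕ) : ℝ) + 1 := by positivity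
    have e3 : rr (m' + 1) (x + b) / ((m' + 1 : ℕ) : ℝ) - rr (m' + 1) (x + b + 1) / ((m' + 1 : ℕ) : ℝ)
        = (rr (m' + 1) (x + b) - rr (m' + 1) (x + b + 1)) / ((m' + 1 : ℕ) : ℝ) := by ring
    rw [e3, h]
    have e2 : b + (x + 1) = x + b + 1 := by ring
    rw [e2]
    have hne : ((x + b : ℕ) : ℝ) + 1 ≠ 0 := by positivity
    have hmne : ((m' + 1 : ℕ) : ℝ) ≠ 0 := by positivity
    field_simp
    push_cast
    ring
  -- now shift
  have h2 : HasSum (fun b : ℕ => if x < b + (x + 1) then rr m (b + (x + 1)) / ((b + (x + 1) : ℕ) : ℝ) else 0)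
      (rr m x / m) := tele2.congr_fun fun b => by rw [if_pos (by omega)]
  have h3 := (hasSum_nat_add_iff (f := fun a : ℕ => if x < a then rr m a / ((a : ℕ) : ℝ) else 0) (x + 1)).mp h2
  have h4 : ∑ i ∈ Finset.range (x + 1), (if x < i then rr m i / ((i : ℕ) : ℝ) else 0) = 0 := by
    apply Finset.sum_eq_zero
    intro i hi
    rw [if_neg (by simp at hi; omega)]
  rw [h4, add_zero] at h3
  exact h3

def cc (m n : ℕ) : ℝ≥0∞ := (((m + n).choose m : ℕ) : ℝ≥0∞)⁻¹

lemma cc_ofReal (m n j : ℕ) (hj : j ≠ 0) :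
    cc m n * ((j : ℝ≥0∞))⁻¹ = ENNReal.ofReal (rr m n / j) := by
  have hjR : (0:ℝ) < j := by positivity
  rw [ENNReal.ofReal_div_of_pos hjR]
  unfold cc rr
  rw [ENNReal.ofReal_inv_of_pos (by exact_mod_cast choose_pos' m n)]
  rw [ENNReal.ofReal_natCast, ENNReal.ofReal_natCast, div_eq_mul_inv]

lemma key_s12 (m x : ℕ) (hm : 1 ≤ m) :
    ∑' a : ℕ, (if x < a then cc m a * ((a : ℝ≥0∞))⁻¹ else 0)
      = cc m x * ((m : ℝ≥0∞))⁻¹ := by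
  have hs := key_hasSum m x hm
  have hnonneg : ∀ a : ℕ, 0 ≤ (if x < a then rr m a / a else 0) := by
    intro a
    split
    · exact div_nonneg (rr_pos m a).le (by positivity)
    · exact le_refl 0
  have h1 : ENNReal.ofReal (∑' a : ℕ, (if x < a then rr m a / a else 0))
      = ∑' a : ℕ, ENNReal.ofReal (if x < a then rr m a / a else 0) :=
    ENNReal.ofReal_tsum_of_nonneg hnonneg hs.summable
  rw [hs.tsum_eq] at h1
  rw [cc_ofReal m x m (by omega), h1]
  refine tsum_congr fun a => ?_
  by_cases hxa : x < a
  · rw [if_pos hxa, if_pos hxa, cc_ofReal m a a (by omega)]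
  · rw [if_neg hxa, if_neg hxa, ENNReal.ofReal_zero]


lemma cc_zero_right (m : ℕ) : cc m 0 = 1 := by simp [cc]

lemma cc_comm (m n : ℕ) : cc m n = cc n m := by
  unfold cc
  rw [Nat.add_comm m n, Nat.add_comm n m, Nat.choose_symm_add, Nat.add_comm m n]

def pp : List ℕ → ℕ → ℝ≥0∞
  | [], m => if m = 0 then 1 else 0
  | a :: K, m => ((m : ℝ≥0∞) ^ a)⁻¹ * ∑ m' ∈ Finset.range m, pp K m'

def ZZ (K L : List ℕ) : ℝ≥0∞ := ∑' m : ℕ, ∑' n : ℕ, pp K m * pp L n * cc m n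

def zEE (K : List ℕ) : ℝ≥0∞ := ∑' m, pp K m

lemma pp_zero (K : List ℕ) (a : ℕ) : pp (a :: K) 0 = 0 := by
  simp [pp]

lemma tsum_ite_range (f : ℕ → ℝ≥0∞) (N : ℕ) :
    ∑' n : ℕ, (if n < N then f n else 0) = ∑ n ∈ Finset.range N, f n := by
  rw [tsum_eq_sum (s := Finset.range N)]
  · exact Finset.sum_congr rfl fun n hn => if_pos (Finset.mem_range.mp hn)
  · intro n hn
    exact if_neg (by simpa using hn)

lemma ZZ_nil_right (K : List ℕ) : ZZ K [] = zEE K := by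
  unfold ZZ zEE
  refine tsum_congr fun m => ?_
  rw [tsum_eq_single 0 (by intro n hn; simp [pp, hn])]
  simp [pp, cc_zero_right]

lemma ZZ_comm (K L : List ℕ) : ZZ K L = ZZ L K := by
  unfold ZZ
  rw [ENNReal.tsum_comm]
  exact tsum_congr fun n => tsum_congr fun m => by rw [cc_comm]; ring

lemma transport (a : ℕ) (K L : List ℕ) : ZZ ((a + 1) :: K) L = ZZ (a :: K) (1 :: L) := by
  unfold ZZ
  refine tsum_congr fun m => ?_
  rcases Nat.eq_zero_or_pos m with hm | hm
  · subst hm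
    simp [pp_zero]
  · have hminv : ((m : ℝ≥0∞) ^ (a + 1))⁻¹ = ((m : ℝ≥0∞) ^ a)⁻¹ * ((m : ℝ≥0∞))⁻¹ := by
      rw [pow_succ, ENNReal.mul_inv (Or.inr (ENNReal.natCast_ne_top m))
        (Or.inl (ENNReal.pow_ne_top (ENNReal.natCast_ne_top m)))]
    calc ∑' n, pp ((a + 1) :: K) m * pp L n * cc m n
        = ∑' n, pp L n * (pp (a :: K) m * (cc m n * ((m : ℝ≥0∞))⁻¹)) := by
          refine tsum_congr fun n => ?_
          show ((m : ℝ≥0∞) ^ (a+1))⁻¹ * _ * pp L n * cc m n = _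
          rw [hminv]
          show _ = pp L n * (((m : ℝ≥0∞) ^ a)⁻¹ * _ * (cc m n * ((m : ℝ≥0∞))⁻¹))
          ring
      _ = ∑' n, pp L n * (pp (a :: K) m *
            ∑' n', (if n < n' then cc m n' * ((n' : ℝ≥0∞))⁻¹ else 0)) := by
          refine tsum_congr fun n => ?_
          rw [key_s12 m n hm]
      _ = ∑' n, ∑' n', (if n < n' then
            pp L n * (pp (a :: K) m * (cc m n' * ((n' : ℝ≥0∞))⁻¹)) else 0) := by
          refine tsum_congr fun n => ?_
          rw [← ENNReal.tsum_mul_left, ← ENNReal.tsum_mul_left]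
          refine tsum_congr fun n' => ?_
          split <;> simp
      _ = ∑' n', ∑' n, (if n < n' then
            pp L n * (pp (a :: K) m * (cc m n' * ((n' : ℝ≥0∞))⁻¹)) else 0) := ENNReal.tsum_comm
      _ = ∑' n', pp (a :: K) m * pp (1 :: L) n' * cc m n' := by
          refine tsum_congr fun n' => ?_
          rw [tsum_ite_range (fun n => pp L n * (pp (a :: K) m * (cc m n' * ((n' : ℝ≥0∞))⁻¹)))]
          rw [← Finset.sum_mul]
          show (∑ n ∈ Finset.range n', pp L n) * _ = pp (a :: K) m * (((n' : ℝ≥0∞) ^ 1)⁻¹ * ∑ n ∈ Finset.range n', pp L n) * cc m n'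
          rw [pow_one]
          ring

lemma move1 (b : ℕ) (K L : List ℕ) : ZZ (1 :: K) (b :: L) = ZZ K ((b + 1) :: L) := by
  rw [ZZ_comm, ← transport b L K, ZZ_comm]

lemma ZZ_nil_left (L : List ℕ) : ZZ [] L = zEE L := by
  rw [ZZ_comm, ZZ_nil_right]

lemma comp_eq_nil_iff (W : Word) : comp W = [] ↔ W = [] := by
  cases W with
  | nil => simp [comp]
  | cons b W' =>
    cases b
    · cases h : comp W' <;> simp [comp, h]
    · simp [comp]

lemma comp_false (W : Word) (a : ℕ) (K : List ℕ) (h : comp W = a :: K) :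
    comp (false :: W) = (a + 1) :: K := by
  simp [comp, h]

lemma word_main : ∀ V U : Word, (V = [] ∨ V.getLast? = some true) →
    (U ≠ [] ∨ V.head? = some false) →
    ZZ (comp V) (comp U) = zEE (comp (theta V.reverse ++ U)) := by
  intro V
  induction V with
  | nil =>
    intro U _ _
    rw [show comp [] = ([] : List ℕ) from rfl, ZZ_nil_left]
    simp [theta]
  | cons b V' IH =>
    intro U hV hU
    rcases hV with hV | hV
    · exact absurd hV (by simp)
    cases b
    · -- V = false :: V'
      have hV' : V' ≠ [] := by
        rintro rfl
        simp at hV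
      obtain ⟨a, K, h⟩ : ∃ a K, comp V' = a :: K := by
        cases h : comp V' with
        | nil => exact absurd ((comp_eq_nil_iff V').mp h) hV'
        | cons a K => exact ⟨a, K, rfl⟩
      rw [comp_false V' a K h, transport, ← h,
        show (1 : ℕ) :: comp U = comp (true :: U) from rfl]
      rw [IH (true :: U) ?_ (Or.inl (by simp))]
      · congr 1
        rw [List.reverse_cons, theta, theta, List.map_append, List.append_assoc]
        rfl
      · right
        obtain ⟨x, t, rfl⟩ := List.exists_cons_of_ne_nil hV'
        rwa [List.getLast?_cons_cons] at hV
    · -- V = true :: V'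
      have hU' : U ≠ [] := by
        rcases hU with h | h
        · exact h
        · simp at h
      obtain ⟨c, L, h⟩ : ∃ c L, comp U = c :: L := by
        cases h : comp U with
        | nil => exact absurd ((comp_eq_nil_iff U).mp h) hU'
        | cons c L => exact ⟨c, L, rfl⟩
      rw [show comp (true :: V') = 1 :: comp V' from rfl, h, move1,
        ← comp_false U c L h]
      have hV'c : V' = [] ∨ V'.getLast? = some true := by
        rcases eq_or_ne V' [] with h' | h'
        · exact Or.inl h'
        · right
          obtain ⟨x, t, rfl⟩ := List.exists_cons_of_ne_nil h'
          rwa [List.getLast?_cons_cons] at hV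
      rw [IH (false :: U) hV'c (Or.inl (by simp))]
      congr 1
      rw [List.reverse_cons, theta, theta, List.map_append, List.append_assoc]
      rfl

-- condition splitting
lemma cond_cons {p : ℕ} (m b : ℕ) (rest : Fin p → ℕ) :
    ((∀ i j : Fin (p + 1), i < j → (Fin.cons m rest : Fin (p+1) → ℕ) j < (Fin.cons m rest : Fin (p+1) → ℕ) i) ∧
      (∀ i, 0 < (Fin.cons m rest : Fin (p+1) → ℕ) i) ∧ (∀ i, (Fin.cons m rest : Fin (p+1) → ℕ) i < b)) ↔
    (0 < m ∧ m < b ∧ ((∀ i j : Fin p, i < j → rest j < rest i) ∧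
      (∀ i, 0 < rest i) ∧ (∀ i, rest i < m))) := by
  constructor
  · rintro ⟨hdec, hpos, hbd⟩
    refine ⟨by simpa using hpos 0, by simpa using hbd 0, ?_, ?_, ?_⟩
    · intro i j hij
      have := hdec i.succ j.succ (by simpa using hij)
      simpa using this
    · intro i
      simpa using hpos i.succ
    · intro i
      have := hdec 0 i.succ (Fin.succ_pos i)
      simpa using this
  · rintro ⟨hm, hmb, hdec, hpos, hlt⟩
    refine ⟨?_, ?_, ?_⟩
    · intro i j hij
      rcases Fin.eq_zero_or_eq_succ j with rfl | ⟨j', rfl⟩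
      · exact absurd hij (by simp)
      rcases Fin.eq_zero_or_eq_succ i with rfl | ⟨i', rfl⟩
      · simpa using hlt j'
      · have hij' : i' < j' := by rwa [Fin.succ_lt_succ_iff] at hij
        simpa using hdec i' j' hij'
    · intro i
      rcases Fin.eq_zero_or_eq_succ i with rfl | ⟨i', rfl⟩
      · simpa using hm
      · simpa using hpos i'
    · intro i
      rcases Fin.eq_zero_or_eq_succ i with rfl | ⟨i', rfl⟩
      · simpa using hmb
      · simpa using (hlt i').trans hmb

lemma cond_cons' {p : ℕ} (m : ℕ) (rest : Fin p → ℕ) :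
    ((∀ i j : Fin (p + 1), i < j → (Fin.cons m rest : Fin (p+1) → ℕ) j < (Fin.cons m rest : Fin (p+1) → ℕ) i) ∧
      (∀ i, 0 < (Fin.cons m rest : Fin (p+1) → ℕ) i)) ↔
    (0 < m ∧ ((∀ i j : Fin p, i < j → rest j < rest i) ∧
      (∀ i, 0 < rest i) ∧ (∀ i, rest i < m))) := by
  constructor
  · rintro ⟨hdec, hpos⟩
    refine ⟨by simpa using hpos 0, ?_, ?_, ?_⟩
    · intro i j hij
      have := hdec i.succ j.succ (by simpa using hij)
      simpa using this
    · intro i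
      simpa using hpos i.succ
    · intro i
      have := hdec 0 i.succ (Fin.succ_pos i)
      simpa using this
  · rintro ⟨hm, hdec, hpos, hlt⟩
    refine ⟨?_, ?_⟩
    · intro i j hij
      rcases Fin.eq_zero_or_eq_succ j with rfl | ⟨j', rfl⟩
      · exact absurd hij (by simp)
      rcases Fin.eq_zero_or_eq_succ i with rfl | ⟨i', rfl⟩
      · simpa using hlt j'
      · have hij' : i' < j' := by rwa [Fin.succ_lt_succ_iff] at hij
        simpa using hdec i' j' hij'
    · intro i
      rcases Fin.eq_zero_or_eq_succ i with rfl | ⟨i', rfl⟩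
      · simpa using hm
      · simpa using hpos i'

lemma BB : ∀ (K : List ℕ) (b : ℕ), 1 ≤ b →
    (∑' rest : Fin K.length → ℕ,
      (if (∀ i j : Fin K.length, i < j → rest j < rest i) ∧ (∀ i, 0 < rest i) ∧ (∀ i, rest i < b)
       then ∏ i, ((rest i : ℝ≥0∞) ^ K.get i)⁻¹ else 0))
    = ∑ m' ∈ Finset.range b, pp K m' := by
  intro K
  induction K with
  | nil =>
    intro b hb
    simp only [List.length_nil]
    rw [tsum_eq_single (fun i => 0) (fun x hx => absurd (Subsingleton.elim x _) hx)]
    rw [if_pos ⟨fun i => i.elim0, fun i => i.elim0, fun i => i.elim0⟩]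
    have : ∑ m' ∈ Finset.range b, pp [] m' = ∑ m' ∈ Finset.range b, if m' = 0 then 1 else 0 := rfl
    rw [this, Finset.sum_ite_eq' (Finset.range b) 0 (fun _ => (1:ℝ≥0∞)),
      if_pos (Finset.mem_range.mpr hb)]
    simp
  | cons k K' IH =>
    intro b hb
    simp only [List.length_cons]
    rw [← (Fin.consEquiv (fun _ : Fin (K'.length + 1) => ℕ)).tsum_eq, ENNReal.tsum_prod']
    have inner : ∀ m : ℕ,
        (∑' rest : Fin K'.length → ℕ,
          (if (∀ i j : Fin (K'.length + 1), i < j →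
                ((Fin.consEquiv (fun _ : Fin (K'.length + 1) => ℕ)) (m, rest)) j <
                ((Fin.consEquiv (fun _ : Fin (K'.length + 1) => ℕ)) (m, rest)) i) ∧
              (∀ i, 0 < ((Fin.consEquiv (fun _ : Fin (K'.length + 1) => ℕ)) (m, rest)) i) ∧
              (∀ i, ((Fin.consEquiv (fun _ : Fin (K'.length + 1) => ℕ)) (m, rest)) i < b)
           then ∏ i : Fin (K'.length + 1),
              ((((Fin.consEquiv (fun _ : Fin (K'.length + 1) => ℕ)) (m, rest)) i : ℝ≥0∞) ^ (k :: K').get i)⁻¹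
           else 0))
        = if m < b then pp (k :: K') m else 0 := by
      intro m
      have hse : ∀ rest : Fin K'.length → ℕ,
          ((Fin.consEquiv (fun _ : Fin (K'.length + 1) => ℕ)) (m, rest)) = (Fin.cons m rest : Fin (K'.length+1) → ℕ) := by
        intro rest
        funext i
        rcases Fin.eq_zero_or_eq_succ i with rfl | ⟨i', rfl⟩ <;> simp [Fin.consEquiv]
      simp only [hse]
      rcases Nat.eq_zero_or_pos m with rfl | hm
      · rw [ENNReal.summable.tsum_eq_zero_iff.mpr, eq_comm]
        · split <;> simp [pp_zero]
        · intro rest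
          rw [if_neg]
          rw [cond_cons]
          rintro ⟨h0, _⟩
          exact absurd h0 (lt_irrefl 0)
      by_cases hmb : m < b
      · rw [if_pos hmb]
        calc _ = ∑' rest : Fin K'.length → ℕ,
              (if (∀ i j : Fin K'.length, i < j → rest j < rest i) ∧ (∀ i, 0 < rest i) ∧
                  (∀ i, rest i < m)
               then ((m : ℝ≥0∞) ^ k)⁻¹ * ∏ i : Fin K'.length, ((rest i : ℝ≥0∞) ^ K'.get i)⁻¹
               else 0) := by
              refine tsum_congr fun rest => ?_
              refine if_congr ((cond_cons m b rest).trans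
                ⟨fun h => h.2.2, fun h => ⟨hm, hmb, h⟩⟩) ?_ rfl
              rw [Fin.prod_univ_succ]
              simp
        _ = ((m : ℝ≥0∞) ^ k)⁻¹ * ∑' rest : Fin K'.length → ℕ,
              (if (∀ i j : Fin K'.length, i < j → rest j < rest i) ∧ (∀ i, 0 < rest i) ∧
                  (∀ i, rest i < m)
               then ∏ i : Fin K'.length, ((rest i : ℝ≥0∞) ^ K'.get i)⁻¹ else 0) := by
              rw [← ENNReal.tsum_mul_left]
              refine tsum_congr fun rest => ?_
              split <;> simp
        _ = pp (k :: K') m := by rw [IH m hm]; rfl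
      · rw [if_neg hmb]
        rw [ENNReal.summable.tsum_eq_zero_iff.mpr]
        intro rest
        rw [if_neg]
        rw [cond_cons]
        rintro ⟨_, h, _⟩
        exact absurd h hmb
    calc _ = ∑' m : ℕ, (if m < b then pp (k :: K') m else 0) := tsum_congr inner
      _ = _ := tsum_ite_range _ b

lemma Bmain (ks : List ℕ) :
    (∑' n : {n : Fin ks.length → ℕ //
        (∀ i j : Fin ks.length, i < j → n j < n i) ∧ ∀ i, 0 < n i},
      ∏ i : Fin ks.length, ((n.1 i : ℝ≥0∞) ^ ks.get i)⁻¹) = zEE ks := by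
  have hsub := tsum_subtype (f := fun n : Fin ks.length → ℕ =>
      ∏ i : Fin ks.length, ((n i : ℝ≥0∞) ^ ks.get i)⁻¹)
    {n : Fin ks.length → ℕ | (∀ i j : Fin ks.length, i < j → n j < n i) ∧ ∀ i, 0 < n i}
  rw [show (∑' n : {n : Fin ks.length → ℕ //
        (∀ i j : Fin ks.length, i < j → n j < n i) ∧ ∀ i, 0 < n i},
      ∏ i : Fin ks.length, ((n.1 i : ℝ≥0∞) ^ ks.get i)⁻¹)
      = ∑' x : {n : Fin ks.length → ℕ |
        (∀ i j : Fin ks.length, i < j → n j < n i) ∧ ∀ i, 0 < n i},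
      ∏ i : Fin ks.length, ((x.1 i : ℝ≥0∞) ^ ks.get i)⁻¹ from rfl, hsub]
  cases ks with
  | nil =>
    simp only [List.length_nil]
    rw [tsum_eq_single (fun i => 0) (fun x hx => absurd (Subsingleton.elim x _) hx)]
    have : zEE [] = ∑' m, pp [] m := rfl
    rw [this, tsum_eq_single 0 (by intro n hn; simp [pp, hn])]
    rw [Set.indicator_apply, if_pos (by exact ⟨fun i => i.elim0, fun i => i.elim0⟩)]
    simp [pp]
  | cons k K' =>
    simp only [List.length_cons]
    have hind : ∀ x : Fin (K'.length + 1) → ℕ,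
        ({n : Fin (K'.length + 1) → ℕ |
          (∀ i j : Fin (K'.length + 1), i < j → n j < n i) ∧ ∀ i, 0 < n i}).indicator
          (fun n => ∏ i : Fin (K'.length + 1), ((n i : ℝ≥0∞) ^ ((k :: K').get i))⁻¹) x
        = if (∀ i j : Fin (K'.length + 1), i < j → x j < x i) ∧ ∀ i, 0 < x i
          then ∏ i : Fin (K'.length + 1), ((x i : ℝ≥0∞) ^ ((k :: K').get i))⁻¹ else 0 := by
      intro x
      rw [Set.indicator_apply]
      rfl
    rw [tsum_congr hind, ← (Fin.consEquiv (fun _ : Fin (K'.length + 1) => ℕ)).tsum_eq, ENNReal.tsum_prod']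
    have inner : ∀ m : ℕ,
        (∑' rest : Fin K'.length → ℕ,
          (if (∀ i j : Fin (K'.length + 1), i < j →
                ((Fin.consEquiv (fun _ : Fin (K'.length + 1) => ℕ)) (m, rest)) j <
                ((Fin.consEquiv (fun _ : Fin (K'.length + 1) => ℕ)) (m, rest)) i) ∧
              (∀ i, 0 < ((Fin.consEquiv (fun _ : Fin (K'.length + 1) => ℕ)) (m, rest)) i)
           then ∏ i : Fin (K'.length + 1),
              ((((Fin.consEquiv (fun _ : Fin (K'.length + 1) => ℕ)) (m, rest)) i : ℝ≥0∞) ^ (k :: K').get i)⁻¹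
           else 0))
        = pp (k :: K') m := by
      intro m
      have hse : ∀ rest : Fin K'.length → ℕ,
          ((Fin.consEquiv (fun _ : Fin (K'.length + 1) => ℕ)) (m, rest)) = (Fin.cons m rest : Fin (K'.length+1) → ℕ) := by
        intro rest
        funext i
        rcases Fin.eq_zero_or_eq_succ i with rfl | ⟨i', rfl⟩ <;> simp [Fin.consEquiv]
      simp only [hse]
      rcases Nat.eq_zero_or_pos m with rfl | hm
      · rw [ENNReal.summable.tsum_eq_zero_iff.mpr, eq_comm]
        · simp [pp_zero]
        · intro rest
          rw [if_neg]
          rw [cond_cons']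
          rintro ⟨h0, _⟩
          exact absurd h0 (lt_irrefl 0)
      calc _ = ∑' rest : Fin K'.length → ℕ,
            (if (∀ i j : Fin K'.length, i < j → rest j < rest i) ∧ (∀ i, 0 < rest i) ∧
                (∀ i, rest i < m)
             then ((m : ℝ≥0∞) ^ k)⁻¹ * ∏ i : Fin K'.length, ((rest i : ℝ≥0∞) ^ K'.get i)⁻¹
             else 0) := by
            refine tsum_congr fun rest => ?_
            refine if_congr ((cond_cons' m rest).trans
              ⟨fun h => h.2, fun h => ⟨hm, h⟩⟩) ?_ rfl
            rw [Fin.prod_univ_succ]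
            simp
        _ = ((m : ℝ≥0∞) ^ k)⁻¹ * ∑' rest : Fin K'.length → ℕ,
            (if (∀ i j : Fin K'.length, i < j → rest j < rest i) ∧ (∀ i, 0 < rest i) ∧
                (∀ i, rest i < m)
             then ∏ i : Fin K'.length, ((rest i : ℝ≥0∞) ^ K'.get i)⁻¹ else 0) := by
            rw [← ENNReal.tsum_mul_left]
            refine tsum_congr fun rest => ?_
            split <;> simp
        _ = pp (k :: K') m := by rw [BB K' m hm]; rfl
    rw [tsum_congr inner]
    rfl

lemma real_eq_toReal {ι : Type*} (f : ι → ℝ≥0) :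
    ∑' i, (f i : ℝ) = (∑' i, (f i : ℝ≥0∞)).toReal := by
  by_cases h : Summable f
  · rw [← ENNReal.coe_tsum h, ENNReal.coe_toReal, NNReal.coe_tsum]
  · rw [tsum_eq_zero_of_not_summable (fun hs => h (NNReal.summable_coe.mp hs))]
    have : (∑' i, (f i : ℝ≥0∞)) = ⊤ := by
      by_contra hne
      exact h (ENNReal.tsum_coe_ne_top_iff_summable.mp hne)
    rw [this, ENNReal.toReal_top]

lemma AB (ks : List ℕ) : zetaC ks = (zEE ks).toReal := by
  set S := {n : Fin ks.length → ℕ //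
      (∀ i j : Fin ks.length, i < j → n j < n i) ∧ ∀ i, 0 < n i}
  set g : S → ℝ≥0 := fun n => ∏ i : Fin ks.length, ((n.1 i : ℝ≥0) ^ ks.get i)⁻¹ with hg
  have h1 : ∀ n : S, (g n : ℝ) = ∏ i : Fin ks.length, ((n.1 i : ℝ) ^ ks.get i)⁻¹ := by
    intro n
    rw [hg]
    push_cast
    rfl
  have h2 : ∀ n : S, (g n : ℝ≥0∞) = ∏ i : Fin ks.length, ((n.1 i : ℝ≥0∞) ^ ks.get i)⁻¹ := by
    intro n
    rw [hg, ENNReal.coe_finset_prod]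
    refine Finset.prod_congr rfl fun i _ => ?_
    rw [ENNReal.coe_inv (pow_ne_zero _ (Nat.cast_ne_zero.mpr (n.2.2 i).ne'))]
    push_cast
    rfl
  unfold zetaC
  rw [← tsum_congr h1, real_eq_toReal g, tsum_congr h2, ← Bmain ks]

end MZVAux

/-- duality.  For every admissible word `W`, the word `←θ(W)` is again
admissible and `ζ(W) = ζ(←θ(W))`. -/
theorem statement12 (W : Word) (hW : Admissible W) :
    Admissible ((theta W).reverse) ∧ zetaW W = zetaW ((theta W).reverse) := by
  obtain ⟨hh, hl⟩ := hW
  have hadm : Admissible ((theta W).reverse) := by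
    constructor
    · rw [List.head?_reverse, theta, List.getLast?_map, hl]
      rfl
    · rw [List.getLast?_reverse, theta, List.head?_map, hh]
      rfl
  refine ⟨hadm, ?_⟩
  have hmain := word_main W [] (Or.inr hl) (Or.inr hh)
  rw [show comp [] = ([] : List ℕ) from rfl, ZZ_nil_right, List.append_nil] at hmain
  have hrev : theta W.reverse = (theta W).reverse := by
    unfold theta
    exact List.map_reverse
  rw [hrev] at hmain
  unfold zetaW
  rw [AB (comp W), AB (comp ((theta W).reverse)), hmain]
end
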